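/- arXiv:1604.07903 — 8 statements merged into one kernel-verified Lean document; each statement's English description precedes it below -/
import Mathlib

section
/- The three symmetric rank-one matrices T_{i,j} = t_{i,j} t_{i,j}^T, for 1 ≤ i < j ≤ 3, where t_{i,j} = x_j − x_i are the edge vectors of a nondegenerate triangle with vertices x_1, x_2, x_3 in ℝ², are linearly independent and hence form a basis of the 3-dimensional space of symmetric 2×2 real matrices. -/
open Matrix

/-- The three rank-one matrices `T i j = t_{i,j} t_{i,j}ᵀ` built from the edge
vectors of a nondegenerate triangle in `ℝ²` are linearly independent and span
the space of symmetric `2×2` matrices. -/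
theorem rank_one_edge_matrices_basis_triangle
    (x : Fin 3 → (Fin 2 → ℝ))
    (hnd : LinearIndependent ℝ ![x 1 - x 0, x 2 - x 0]) :
    LinearIndependent ℝ
      ![vecMulVec (x 1 - x 0) (x 1 - x 0),
        vecMulVec (x 2 - x 0) (x 2 - x 0),
        vecMulVec (x 2 - x 1) (x 2 - x 1)] ∧
    ∀ A : Matrix (Fin 2) (Fin 2) ℝ, Aᵀ = A →
      A ∈ Submodule.span ℝ
        {vecMulVec (x 1 - x 0) (x 1 - x 0),
         vecMulVec (x 2 - x 0) (x 2 - x 0),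
         vecMulVec (x 2 - x 1) (x 2 - x 1)} := by
  set u : Fin 2 → ℝ := x 1 - x 0 with hu
  set v : Fin 2 → ℝ := x 2 - x 0 with hv
  have hw : x 2 - x 1 = v - u := by rw [hu, hv]; abel
  set a := u 0; set b := u 1; set c := v 0; set d := v 1
  -- nonvanishing determinant
  have hD : a * d - b * c ≠ 0 := by
    have hM : IsUnit (Matrix.of ![u, v]) :=
      Matrix.linearIndependent_rows_iff_isUnit.1 hnd
    have hdet : IsUnit (Matrix.of ![u, v]).det := (Matrix.isUnit_iff_isUnit_det _).1 hM
    have : (Matrix.of ![u, v]).det = a * d - b * c := by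
      rw [Matrix.det_fin_two]; simp [Matrix.of_apply]; rfl
    rw [this] at hdet
    exact hdet.ne_zero
  have hw0 : (v - u) 0 = c - a := rfl
  have hw1 : (v - u) 1 = d - b := rfl
  rw [hw]
  constructor
  · rw [Fintype.linearIndependent_iff]
    intro g hg
    have h00 := congrFun (congrFun hg 0) 0
    have h01 := congrFun (congrFun hg 0) 1
    have h11 := congrFun (congrFun hg 1) 1
    simp [Fin.sum_univ_three, vecMulVec_apply, hw0, hw1] at h00 h01 h11
    have e00 : g 0 * (a * a) + g 1 * (c * c) + g 2 * ((c - a) * (c - a)) = 0 := by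
      linarith [h00]
    have e01 : g 0 * (a * b) + g 1 * (c * d) + g 2 * ((c - a) * (d - b)) = 0 := by
      linarith [h01]
    have e11 : g 0 * (b * b) + g 1 * (d * d) + g 2 * ((d - b) * (d - b)) = 0 := by
      linarith [h11]
    have hD2 : (a * d - b * c) ^ 2 ≠ 0 := pow_ne_zero _ hD
    have hg0 : g 0 * (a * d - b * c) ^ 2 = 0 := by
      linear_combination (d * (d - b)) * e00 + (a * d + b * c - 2 * c * d) * e01 +
        (c * (c - a)) * e11
    have hg1 : g 1 * (a * d - b * c) ^ 2 = 0 := by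
      linear_combination (b * (b - d)) * e00 + (a * d + b * c - 2 * a * b) * e01 +
        (a * (a - c)) * e11
    have hg2 : g 2 * (a * d - b * c) ^ 2 = 0 := by
      linear_combination (b * d) * e00 + (-(a * d + b * c)) * e01 + (a * c) * e11
    intro i
    fin_cases i
    · exact (mul_eq_zero.1 hg0).resolve_right hD2
    · exact (mul_eq_zero.1 hg1).resolve_right hD2
    · exact (mul_eq_zero.1 hg2).resolve_right hD2
  · intro A hA
    set p := A 0 0; set q := A 0 1; set r := A 1 1
    have hq : A 1 0 = q := by
      have := congrFun (congrFun hA 1) 0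
      simpa [Matrix.transpose_apply] using this.symm
    set D := a * d - b * c
    set α := (p * d * (d - b) + q * (a * d + b * c - 2 * c * d) + r * c * (c - a)) / D ^ 2
    set β := (p * b * (b - d) + q * (a * d + b * c - 2 * a * b) + r * a * (a - c)) / D ^ 2
    set γ := (p * b * d - q * (a * d + b * c) + r * a * c) / D ^ 2
    have hrepr : A = α • vecMulVec u u + β • vecMulVec v v +
        γ • vecMulVec (v - u) (v - u) := by
      ext i j
      fin_cases i <;> fin_cases j <;>
        simp only [Matrix.add_apply, Matrix.smul_apply, vecMulVec_apply, Fin.zero_eta, Fin.mk_one, hw0, hw1,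
          show u 0 = a from rfl, show u 1 = b from rfl, show v 0 = c from rfl,
          show v 1 = d from rfl, smul_eq_mul, α, β, γ] <;>
      · show _ = _
        first
          | (show p = _; field_simp [α, β, γ]; simp only [D]; ring)
          | (show q = _; field_simp [α, β, γ]; simp only [D]; ring)
          | (show A 1 0 = _; rw [hq]; field_simp [α, β, γ]; simp only [D]; ring)
          | (show r = _; field_simp [α, β, γ]; simp only [D]; ring)
    rw [hrepr]
    have h1 : vecMulVec u u ∈ ({vecMulVec u u, vecMulVec v v,
        vecMulVec (v - u) (v - u)} : Set (Matrix (Fin 2) (Fin 2) ℝ)) := by simp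
    have h2 : vecMulVec v v ∈ ({vecMulVec u u, vecMulVec v v,
        vecMulVec (v - u) (v - u)} : Set (Matrix (Fin 2) (Fin 2) ℝ)) := by simp
    have h3 : vecMulVec (v - u) (v - u) ∈ ({vecMulVec u u, vecMulVec v v,
        vecMulVec (v - u) (v - u)} : Set (Matrix (Fin 2) (Fin 2) ℝ)) := by simp
    exact Submodule.add_mem _
      (Submodule.add_mem _
        (Submodule.smul_mem _ _ (Submodule.subset_span h1))
        (Submodule.smul_mem _ _ (Submodule.subset_span h2)))
      (Submodule.smul_mem _ _ (Submodule.subset_span h3))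
end

section
/- The six symmetric rank-one matrices T_{i,j} = t_{i,j} t_{i,j}^T, for 1 ≤ i < j ≤ 4, where t_{i,j} = x_j − x_i are the edge vectors of a nondegenerate tetrahedron with vertices x_1, x_2, x_3, x_4 in ℝ³, are linearly independent and form a basis of the 6-dimensional space of symmetric 3×3 real matrices. -/
open Matrix

private def cvec : Fin 6 → (Fin 3 → ℝ) :=
  ![![1,0,0], ![0,1,0], ![0,0,1], ![-1,1,0], ![-1,0,1], ![0,-1,1]]

private lemma cvec0 : cvec 0 = ![1,0,0] := rfl
private lemma cvec1 : cvec 1 = ![0,1,0] := rfl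
private lemma cvec2 : cvec 2 = ![0,0,1] := rfl
private lemma cvec3 : cvec 3 = ![-1,1,0] := rfl
private lemma cvec4 : cvec 4 = ![-1,0,1] := rfl
private lemma cvec5 : cvec 5 = ![0,-1,1] := rfl

private lemma conj_vecMulVec (M : Matrix (Fin 3) (Fin 3) ℝ) (a b : Fin 3 → ℝ) :
    M * vecMulVec a b * Mᵀ = vecMulVec (M *ᵥ a) (M *ᵥ b) := by
  ext i j
  simp [Matrix.mul_apply, Matrix.vecMulVec_apply, Matrix.mulVec, dotProduct,
    Fin.sum_univ_three, Matrix.transpose_apply]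
  ring

private lemma Sli : LinearIndependent ℝ (fun i => vecMulVec (cvec i) (cvec i)) := by
  rw [Fintype.linearIndependent_iff]
  intro g hg
  have h : ∀ i j : Fin 3, (∑ k, g k • vecMulVec (cvec k) (cvec k)) i j = 0 := by
    intro i j; rw [hg]; rfl
  have h00 := h 0 0
  have h11 := h 1 1
  have h22 := h 2 2
  have h01 := h 0 1
  have h02 := h 0 2
  have h12 := h 1 2
  simp [Matrix.sum_apply, Fin.sum_univ_six, cvec0, cvec1, cvec2, cvec3, cvec4, cvec5,
    Matrix.vecMulVec_apply, Matrix.cons_val_zero, Matrix.cons_val_one, Matrix.head_cons,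
    Matrix.cons_val_two, Matrix.vecTail, Matrix.vecHead] at h00 h11 h22 h01 h02 h12
  intro i
  fin_cases i <;> simp <;> linarith

private lemma span_symm (B : Matrix (Fin 3) (Fin 3) ℝ) (hB : Bᵀ = B) :
    B = (B 0 0 + B 0 1 + B 0 2) • vecMulVec (cvec 0) (cvec 0)
      + (B 1 1 + B 0 1 + B 1 2) • vecMulVec (cvec 1) (cvec 1)
      + (B 2 2 + B 0 2 + B 1 2) • vecMulVec (cvec 2) (cvec 2)
      + (-B 0 1) • vecMulVec (cvec 3) (cvec 3)
      + (-B 0 2) • vecMulVec (cvec 4) (cvec 4)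
      + (-B 1 2) • vecMulVec (cvec 5) (cvec 5) := by
  have h10 : B 1 0 = B 0 1 := congrFun (congrFun hB 0) 1
  have h20 : B 2 0 = B 0 2 := congrFun (congrFun hB 0) 2
  have h21 : B 2 1 = B 1 2 := congrFun (congrFun hB 1) 2
  ext i j
  fin_cases i <;> fin_cases j <;>
    simp [cvec0, cvec1, cvec2, cvec3, cvec4, cvec5, Matrix.vecMulVec_apply, h10, h20, h21,
      Matrix.cons_val_zero, Matrix.cons_val_one, Matrix.head_cons, Matrix.cons_val_two,
      Matrix.vecTail, Matrix.vecHead] <;> ring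

/-- The six rank-one matrices `T i j = t_{i,j} t_{i,j}ᵀ` built from the edge
vectors of a nondegenerate tetrahedron in `ℝ³` are linearly independent and
span the space of symmetric `3×3` matrices. -/
theorem rank_one_edge_matrices_basis_tetrahedron
    (x : Fin 4 → (Fin 3 → ℝ))
    (hnd : LinearIndependent ℝ ![x 1 - x 0, x 2 - x 0, x 3 - x 0]) :
    LinearIndependent ℝ
      ![vecMulVec (x 1 - x 0) (x 1 - x 0),
        vecMulVec (x 2 - x 0) (x 2 - x 0),
        vecMulVec (x 3 - x 0) (x 3 - x 0),
        vecMulVec (x 2 - x 1) (x 2 - x 1),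
        vecMulVec (x 3 - x 1) (x 3 - x 1),
        vecMulVec (x 3 - x 2) (x 3 - x 2)] ∧
    ∀ A : Matrix (Fin 3) (Fin 3) ℝ, Aᵀ = A →
      A ∈ Submodule.span ℝ
        {vecMulVec (x 1 - x 0) (x 1 - x 0),
         vecMulVec (x 2 - x 0) (x 2 - x 0),
         vecMulVec (x 3 - x 0) (x 3 - x 0),
         vecMulVec (x 2 - x 1) (x 2 - x 1),
         vecMulVec (x 3 - x 1) (x 3 - x 1),
         vecMulVec (x 3 - x 2) (x 3 - x 2)} := by
  have hvw : x 2 - x 1 = (x 2 - x 0) - (x 1 - x 0) := by ext j; simp only [Pi.sub_apply]; ring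
  have hw1 : x 3 - x 1 = (x 3 - x 0) - (x 1 - x 0) := by ext j; simp only [Pi.sub_apply]; ring
  have hw2 : x 3 - x 2 = (x 3 - x 0) - (x 2 - x 0) := by ext j; simp only [Pi.sub_apply]; ring
  rw [hvw, hw1, hw2]
  set u := x 1 - x 0 with hu
  set v := x 2 - x 0 with hv
  set w := x 3 - x 0 with hw
  set M : Matrix (Fin 3) (Fin 3) ℝ :=
    !![u 0, v 0, w 0; u 1, v 1, w 1; u 2, v 2, w 2] with hMdef
  -- M is invertible
  have hMTrows : (fun i => Mᵀ i) = ![u, v, w] := by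
    funext i
    fin_cases i <;> · ext j; fin_cases j <;> simp [hMdef]
  have hMTunit : IsUnit Mᵀ := by
    rw [← Matrix.linearIndependent_rows_iff_isUnit]; rw [← hMTrows] at hnd; exact hnd
  have hMunit : IsUnit M := (Matrix.isUnit_transpose M).mp hMTunit
  have hdet : IsUnit M.det := (Matrix.isUnit_iff_isUnit_det M).1 hMunit
  -- the images of the cvec's under M
  have hm0 : M *ᵥ cvec 0 = u := by
    ext j; fin_cases j <;> simp [hMdef, cvec0, cvec1, cvec2, cvec3, cvec4, cvec5, Matrix.mulVec, dotProduct, Fin.sum_univ_three]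
  have hm1 : M *ᵥ cvec 1 = v := by
    ext j; fin_cases j <;> simp [hMdef, cvec0, cvec1, cvec2, cvec3, cvec4, cvec5, Matrix.mulVec, dotProduct, Fin.sum_univ_three]
  have hm2 : M *ᵥ cvec 2 = w := by
    ext j; fin_cases j <;> simp [hMdef, cvec0, cvec1, cvec2, cvec3, cvec4, cvec5, Matrix.mulVec, dotProduct, Fin.sum_univ_three]
  have hm3 : M *ᵥ cvec 3 = v - u := by
    ext j; fin_cases j <;>
      · simp [hMdef, cvec0, cvec1, cvec2, cvec3, cvec4, cvec5, Matrix.mulVec, dotProduct, Fin.sum_univ_three]; ring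
  have hm4 : M *ᵥ cvec 4 = w - u := by
    ext j; fin_cases j <;>
      · simp [hMdef, cvec0, cvec1, cvec2, cvec3, cvec4, cvec5, Matrix.mulVec, dotProduct, Fin.sum_univ_three]; ring
  have hm5 : M *ᵥ cvec 5 = w - v := by
    ext j; fin_cases j <;>
      · simp [hMdef, cvec0, cvec1, cvec2, cvec3, cvec4, cvec5, Matrix.mulVec, dotProduct, Fin.sum_univ_three]; ring
  -- the conjugation linear map
  set f : Matrix (Fin 3) (Fin 3) ℝ →ₗ[ℝ] Matrix (Fin 3) (Fin 3) ℝ :=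
    (LinearMap.mulRight ℝ Mᵀ).comp (LinearMap.mulLeft ℝ M) with hfdef
  have hf : ∀ A, f A = M * A * Mᵀ := fun A => rfl
  have hfinj : Function.Injective f := by
    intro A B hAB
    rw [hf, hf, Matrix.mul_assoc, Matrix.mul_assoc] at hAB
    have h1 : A * Mᵀ = B * Mᵀ := hMunit.mul_right_injective hAB
    exact hMTunit.mul_left_injective h1
  constructor
  · have hli := Sli.map' f (LinearMap.ker_eq_bot.2 hfinj)
    have hmv : ∀ i : Fin 6, M *ᵥ cvec i = ![u, v, w, v - u, w - u, w - v] i := by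
      intro i
      fin_cases i
      exacts [hm0, hm1, hm2, hm3, hm4, hm5]
    have heq : (f ∘ fun i => vecMulVec (cvec i) (cvec i)) =
        ![vecMulVec u u, vecMulVec v v, vecMulVec w w,
          vecMulVec (v - u) (v - u), vecMulVec (w - u) (w - u),
          vecMulVec (w - v) (w - v)] := by
      funext i
      rw [Function.comp_apply, hf, conj_vecMulVec, hmv]
      fin_cases i <;> rfl
    rw [← heq]
    exact hli
  · intro A hA
    set B := M⁻¹ * A * (M⁻¹)ᵀ with hBdef
    have h1 : M * M⁻¹ = 1 := Matrix.mul_nonsing_inv M hdet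
    have h1' : M⁻¹ * M = 1 := Matrix.nonsing_inv_mul M hdet
    have h2 : (M⁻¹)ᵀ * Mᵀ = 1 := by rw [← Matrix.transpose_mul, h1, Matrix.transpose_one]
    have hBsymm : Bᵀ = B := by
      rw [hBdef]
      simp only [Matrix.transpose_mul, Matrix.transpose_transpose, hA, Matrix.mul_assoc]
    have hArec : A = M * B * Mᵀ := by
      rw [hBdef]
      calc A = (M * M⁻¹) * A * ((M⁻¹)ᵀ * Mᵀ) := by rw [h1, h2, Matrix.one_mul, Matrix.mul_one]
        _ = M * (M⁻¹ * A * (M⁻¹)ᵀ) * Mᵀ := by simp only [Matrix.mul_assoc]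
    have hBspan := span_symm B hBsymm
    have hAexp : A = (B 0 0 + B 0 1 + B 0 2) • vecMulVec u u
        + (B 1 1 + B 0 1 + B 1 2) • vecMulVec v v
        + (B 2 2 + B 0 2 + B 1 2) • vecMulVec w w
        + (-B 0 1) • vecMulVec (v - u) (v - u)
        + (-B 0 2) • vecMulVec (w - u) (w - u)
        + (-B 1 2) • vecMulVec (w - v) (w - v) := by
      rw [hArec]
      conv_lhs => rw [hBspan]
      rw [← hm3, ← hm4, ← hm5, ← hm0, ← hm1, ← hm2, ← conj_vecMulVec, ← conj_vecMulVec,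
        ← conj_vecMulVec, ← conj_vecMulVec, ← conj_vecMulVec, ← conj_vecMulVec]
      simp only [Matrix.mul_add, Matrix.add_mul, Matrix.mul_smul, Matrix.smul_mul]
    rw [hAexp]
    have mem : ∀ C ∈ ({vecMulVec u u, vecMulVec v v, vecMulVec w w,
        vecMulVec (v - u) (v - u), vecMulVec (w - u) (w - u),
        vecMulVec (w - v) (w - v)} : Set (Matrix (Fin 3) (Fin 3) ℝ)),
        C ∈ Submodule.span ℝ ({vecMulVec u u, vecMulVec v v, vecMulVec w w,
          vecMulVec (v - u) (v - u), vecMulVec (w - u) (w - u),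
          vecMulVec (w - v) (w - v)} : Set (Matrix (Fin 3) (Fin 3) ℝ)) :=
      fun C hC => Submodule.subset_span hC
    refine Submodule.add_mem _ (Submodule.add_mem _ (Submodule.add_mem _ (Submodule.add_mem _
      (Submodule.add_mem _ ?_ ?_) ?_) ?_) ?_) ?_ <;>
      exact Submodule.smul_mem _ _ (Submodule.subset_span (by simp))
end

section
/- For any k ≥ 1 and any nondegenerate tetrahedron K, the polynomial space P_{ij} = P_k(K;ℝ) + (λ_i − λ_j)·span{λ_ℓ^a λ_m^b : a+b = k} + λ_iλ_j P_{k−1}(K;ℝ) decomposes as a direct sum P_{ij} = P_k(K;ℝ) ⊕ (λ_i − λ_j)·span{λ_ℓ^a λ_m^b : a+b = k} ⊕ λ_iλ_j P_{k−2}^⊥(K;ℝ), where P_{k−2}^⊥(K;ℝ) = {p ∈ P_{k−1}(K;ℝ) : ∫_K p q dx = 0 for all q ∈ P_{k−2}(K;ℝ)}. -/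
open MvPolynomial MeasureTheory

namespace ShapeAux
set_option linter.unusedSectionVars false
set_option maxHeartbeats 1000000
variable {σ : Type*} [Fintype σ] [DecidableEq σ]



lemma degree_add (a b : σ →₀ ℕ) : (a + b).degree = a.degree + b.degree := by
  show ((a+b).sum fun _ n => n) = (a.sum fun _ n => n) + (b.sum fun _ n => n)
  exact Finsupp.sum_add_index' (fun _ => rfl) (fun _ _ _ => rfl)

lemma coeff_zero_of_degree_gt {p : MvPolynomial σ ℝ} {d : σ →₀ ℕ}
    (h : p.totalDegree < d.degree) : coeff d p = 0 :=
  coeff_eq_zero_of_totalDegree_lt h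

/-- homogeneous component of a product, top degrees -/
lemma hc_mul {f g : MvPolynomial σ ℝ} {d e : ℕ}
    (hf : f.totalDegree ≤ d) (hg : g.totalDegree ≤ e) :
    homogeneousComponent (d + e) (f * g)
      = homogeneousComponent d f * homogeneousComponent e g := by
  ext u
  rw [coeff_homogeneousComponent, coeff_mul, coeff_mul]
  by_cases hu : u.degree = d + e
  · rw [if_pos hu]
    refine Finset.sum_congr rfl ?_
    rintro ⟨a, b⟩ hab
    rw [Finset.HasAntidiagonal.mem_antidiagonal] at hab
    have hdeg : a.degree + b.degree = d + e := by rw [← degree_add, hab, hu]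
    by_cases ha : a.degree = d
    · have hb : b.degree = e := by omega
      rw [coeff_homogeneousComponent, coeff_homogeneousComponent, if_pos ha, if_pos hb]
    · rcases Nat.lt_or_ge a.degree d with hlt | hge
      · have hb : e < b.degree := by omega
        have : coeff b g = 0 := coeff_eq_zero_of_totalDegree_lt (lt_of_le_of_lt hg hb)
        rw [coeff_homogeneousComponent, coeff_homogeneousComponent, this]
        simp
      · have hgt : d < a.degree := lt_of_le_of_ne hge (fun hh => ha hh.symm)
        have : coeff a f = 0 := coeff_eq_zero_of_totalDegree_lt (lt_of_le_of_lt hf hgt)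
        rw [coeff_homogeneousComponent, this]
        simp
  · rw [if_neg hu]
    symm
    refine Finset.sum_eq_zero ?_
    rintro ⟨a, b⟩ hab
    rw [Finset.HasAntidiagonal.mem_antidiagonal] at hab
    rw [coeff_homogeneousComponent, coeff_homogeneousComponent]
    by_cases ha : a.degree = d
    · by_cases hb : b.degree = e
      · exfalso; apply hu; rw [← hab, degree_add, ha, hb]
      · rw [if_neg hb]; simp
    · rw [if_neg ha]; simp

lemma hc_of_isHomogeneous {p : MvPolynomial σ ℝ} {n : ℕ} (h : p.IsHomogeneous n) :
    homogeneousComponent n p = p := by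
  rw [homogeneousComponent_of_mem h, if_pos rfl]

lemma hc_of_isHomogeneous_ne {p : MvPolynomial σ ℝ} {n m : ℕ} (h : p.IsHomogeneous n)
    (hnm : m ≠ n) : homogeneousComponent m p = 0 := by
  rw [homogeneousComponent_of_mem h, if_neg hnm]

/-- a polynomial of degree ≤ n with vanishing n-th component is the sum of lower components -/
lemma eq_sum_lower {p : MvPolynomial σ ℝ} {n : ℕ} (h1 : p.totalDegree ≤ n)
    (h2 : homogeneousComponent n p = 0) :
    p = ∑ i ∈ Finset.range n, homogeneousComponent i p := by
  have hs : ∑ i ∈ Finset.range (n + 1), homogeneousComponent i p = p := by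
    have hle : p.totalDegree + 1 ≤ n + 1 := by omega
    rw [← Finset.sum_range_add_sum_Ico _ hle, sum_homogeneousComponent p]
    have hz : ∑ i ∈ Finset.Ico (p.totalDegree + 1) (n + 1), homogeneousComponent i p = 0 := by
      refine Finset.sum_eq_zero fun i hi => ?_
      rw [Finset.mem_Ico] at hi
      exact homogeneousComponent_eq_zero i p (by omega)
    rw [hz, add_zero]
  rw [Finset.sum_range_succ, h2, add_zero] at hs
  exact hs.symm

lemma deg_le_of_hc_eq_zero {p : MvPolynomial σ ℝ} {n : ℕ} (h1 : p.totalDegree ≤ n)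
    (h2 : homogeneousComponent n p = 0) : p.totalDegree ≤ n - 1 := by
  rw [eq_sum_lower h1 h2]
  refine (totalDegree_finset_sum _ _).trans (Finset.sup_le fun i hi => ?_)
  rw [Finset.mem_range] at hi
  refine le_trans ?_ (by omega : i ≤ n - 1)
  exact (homogeneousComponent_isHomogeneous i p).totalDegree_le

lemma eq_zero_of_deg_le_zero_hc {p : MvPolynomial σ ℝ} (h1 : p.totalDegree ≤ 0)
    (h2 : homogeneousComponent 0 p = 0) : p = 0 := by
  have := eq_sum_lower h1 h2
  simpa using this




lemma exists_single_of_degree_le_one {d : σ →₀ ℕ} (h : d.degree ≤ 1) :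
    d = 0 ∨ ∃ t, d = Finsupp.single t 1 := by
  rcases Nat.le_one_iff_eq_zero_or_eq_one.mp h with h0 | h1
  · left; exact (Finsupp.degree_eq_zero_iff d).mp h0
  · right
    have hne : d.support.Nonempty := by
      by_contra hcon
      rw [Finset.not_nonempty_iff_eq_empty] at hcon
      have : d = 0 := by ext s; by_contra hs; exact absurd (Finsupp.mem_support_iff.mpr hs) (by simp [hcon])
      rw [this] at h1; simp [map_zero] at h1
    obtain ⟨t, ht⟩ := hne
    refine ⟨t, ?_⟩
    have htpos : 1 ≤ d t := Nat.one_le_iff_ne_zero.mpr (Finsupp.mem_support_iff.mp ht)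
    have hsum : ∑ i ∈ d.support, d i = 1 := h1
    have hdt : d t = 1 := by
      have : d t ≤ ∑ i ∈ d.support, d i := Finset.single_le_sum (fun _ _ => Nat.zero_le _) ht
      omega
    ext s
    by_cases hst : s = t
    · simp [hst, hdt]
    · rw [Finsupp.single_apply, if_neg (fun hh => hst hh.symm)]
      by_contra hs
      have hsmem : s ∈ d.support := Finsupp.mem_support_iff.mpr hs
      have : d t + d s ≤ ∑ i ∈ d.support, d i := by
        rw [← Finset.sum_pair (fun hh => hst (hh.symm))]
        exact Finset.sum_le_sum_of_subset (by
          intro u hu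
          simp only [Finset.mem_insert, Finset.mem_singleton] at hu
          rcases hu with rfl | rfl <;> assumption)
      omega

lemma coeff_zero_of_degree_gt' {p : MvPolynomial σ ℝ} {d : σ →₀ ℕ}
    (h : p.totalDegree < d.degree) : coeff d p = 0 :=
  coeff_eq_zero_of_totalDegree_lt h

lemma repr_deg_le_one (q : MvPolynomial σ ℝ) (h : q.totalDegree ≤ 1) :
    q = monomial 0 (coeff 0 q)
      + ∑ t, monomial (Finsupp.single t 1) (coeff (Finsupp.single t 1) q) := by
  ext d
  rw [coeff_add, MvPolynomial.coeff_sum]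
  by_cases hd : d.degree ≤ 1
  · rcases exists_single_of_degree_le_one hd with rfl | ⟨t, rfl⟩
    · rw [coeff_monomial, if_pos rfl]
      have : ∀ t : σ, coeff (0 : σ →₀ ℕ) (monomial (Finsupp.single t 1)
          (coeff (Finsupp.single t 1) q)) = 0 := by
        intro t
        rw [coeff_monomial, if_neg ((fun hh => one_ne_zero (Finsupp.single_eq_zero.mp hh)))]
      rw [Finset.sum_congr rfl (fun t _ => this t), Finset.sum_const_zero, add_zero]
    · rw [coeff_monomial, if_neg (by
        intro hh
        exact (fun hh => one_ne_zero (Finsupp.single_eq_zero.mp hh)) hh.symm), zero_add]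
      rw [Finset.sum_eq_single t]
      · rw [coeff_monomial, if_pos rfl]
      · intro s _ hst
        rw [coeff_monomial, if_neg]
        intro hh
        exact hst (by
          have := Finsupp.single_left_injective (one_ne_zero (α := ℕ)) hh
          exact this)
      · intro hh; exact absurd (Finset.mem_univ t) hh
  · push_neg at hd
    have h0 : coeff d q = 0 := coeff_zero_of_degree_gt' (by omega)
    rw [h0, coeff_monomial, if_neg, Finset.sum_eq_zero, add_zero]
    · intro t _
      rw [coeff_monomial, if_neg]
      intro hh
      rw [← hh] at hd
      simp [Finsupp.degree_single] at hd
    · intro hh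
      rw [← hh] at hd
      simp [Finsupp.degree] at hd

lemma eval_deg_le_one (q : MvPolynomial σ ℝ) (h : q.totalDegree ≤ 1) (y : σ → ℝ) :
    eval y q = coeff 0 q + ∑ t, coeff (Finsupp.single t 1) q * y t := by
  conv_lhs => rw [repr_deg_le_one q h]
  rw [map_add, map_sum]
  congr 1
  · simp [eval_monomial]
  · refine Finset.sum_congr rfl fun t _ => ?_
    simp [eval_monomial]

lemma totalDegree_aeval_le (g : σ → MvPolynomial σ ℝ) (hg : ∀ c, (g c).totalDegree ≤ 1)
    (p : MvPolynomial σ ℝ) : (aeval g p).totalDegree ≤ p.totalDegree := by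
  conv_lhs => rw [as_sum p]
  rw [map_sum]
  refine (totalDegree_finset_sum _ _).trans (Finset.sup_le fun d hd => ?_)
  rw [aeval_monomial]
  refine (totalDegree_mul _ _).trans ?_
  have h1 : (algebraMap ℝ (MvPolynomial σ ℝ) (coeff d p)).totalDegree = 0 := totalDegree_C _
  rw [h1, zero_add]
  have h2 : (d.prod fun i k => g i ^ k).totalDegree ≤ ∑ i ∈ d.support, d i := by
    rw [Finsupp.prod]
    refine (totalDegree_finset_prod _ _).trans ?_
    refine Finset.sum_le_sum fun i _ => ?_
    refine (totalDegree_pow _ _).trans ?_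
    exact Nat.mul_le_mul_left _ (hg i)
    |>.trans (by omega)
  exact h2.trans (le_totalDegree hd)



lemma eval_affine_comb (q : MvPolynomial σ ℝ) (h : q.totalDegree ≤ 1)
    (p : σ → ℝ) (v : σ → (σ → ℝ)) (z : σ → ℝ) :
    eval (fun c => p c + ∑ t, z t * (v t c - p c)) q
      = eval p q + ∑ t, z t * (eval (v t) q - eval p q) := by
  rw [eval_deg_le_one q h, eval_deg_le_one q h]
  have hv : ∀ t, eval (v t) q = coeff 0 q + ∑ c, coeff (Finsupp.single c 1) q * v t c :=
    fun t => eval_deg_le_one q h (v t)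
  simp only [hv]
  rw [Finset.sum_congr rfl (fun c _ => by
    rw [mul_add, Finset.mul_sum] :
    ∀ c ∈ Finset.univ, coeff (Finsupp.single c 1) q * (p c + ∑ t, z t * (v t c - p c))
      = coeff (Finsupp.single c 1) q * p c
        + ∑ t, coeff (Finsupp.single c 1) q * (z t * (v t c - p c)))]
  rw [Finset.sum_add_distrib, Finset.sum_comm]
  have : ∀ t, ∑ c, coeff (Finsupp.single c 1) q * (z t * (v t c - p c))
      = z t * ((coeff 0 q + ∑ c, coeff (Finsupp.single c 1) q * v t c)
          - (coeff 0 q + ∑ c, coeff (Finsupp.single c 1) q * p c)) := by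
    intro t
    rw [add_sub_add_left_eq_sub, ← Finset.sum_sub_distrib, Finset.mul_sum]
    exact Finset.sum_congr rfl fun c _ => by ring
  rw [Finset.sum_congr rfl fun t _ => this t]
  ring



lemma eval_zero_on_open {p : MvPolynomial (Fin 3) ℝ} {U : Set (Fin 3 → ℝ)}
    (hU : IsOpen U) (hne : U.Nonempty) (h : ∀ y ∈ U, eval y p = 0) : p = 0 := by
  have hana : AnalyticOnNhd ℝ (fun y : Fin 3 → ℝ => eval y p) Set.univ := by
    have := AnalyticOnNhd.eval_linearMap (LinearMap.id : (Fin 3 → ℝ) →ₗ[ℝ] (Fin 3 → ℝ)) p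
    simpa using this
  obtain ⟨y0, hy0⟩ := hne
  have hev : (fun y : Fin 3 → ℝ => eval y p) =ᶠ[nhds y0] 0 := by
    filter_upwards [hU.mem_nhds hy0] with y hy
    exact h y hy
  have := hana.eqOn_zero_of_preconnected_of_eventuallyEq_zero
    isPreconnected_univ (Set.mem_univ y0) hev
  refine MvPolynomial.funext fun y => ?_
  have := this (Set.mem_univ y)
  simpa using this

lemma integrable_eval_mul {K : Set (Fin 3 → ℝ)} (hcomp : IsCompact K)
    (p q : MvPolynomial (Fin 3) ℝ) :
    IntegrableOn (fun y => eval y p * eval y q) K volume :=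
  (Continuous.continuousOn (by continuity)).integrableOn_compact hcomp

lemma poly_eq_zero_of_integral_sq {K : Set (Fin 3 → ℝ)} (hcomp : IsCompact K)
    (hint : (interior K).Nonempty) (p : MvPolynomial (Fin 3) ℝ)
    (h : ∫ y in K, eval y p * eval y p = 0) : p = 0 := by
  by_contra hp
  set f : (Fin 3 → ℝ) → ℝ := fun y => eval y p * eval y p with hf
  have hnonneg : 0 ≤ᶠ[ae (volume.restrict K)] f :=
    Filter.Eventually.of_forall fun y => mul_self_nonneg _
  have hintg : IntegrableOn f K volume := integrable_eval_mul hcomp p p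
  have hiff := setIntegral_pos_iff_support_of_nonneg_ae hnonneg hintg
  have hV : IsOpen ({y : Fin 3 → ℝ | eval y p ≠ 0} ∩ interior K) :=
    (isOpen_ne_fun (MvPolynomial.continuous_eval p) continuous_const).inter isOpen_interior
  have hVne : ({y : Fin 3 → ℝ | eval y p ≠ 0} ∩ interior K).Nonempty := by
    by_contra hcon
    rw [Set.not_nonempty_iff_eq_empty] at hcon
    apply hp
    refine eval_zero_on_open isOpen_interior hint fun y hy => ?_
    by_contra hne
    have hmem : y ∈ ({y : Fin 3 → ℝ | eval y p ≠ 0} ∩ interior K) := ⟨hne, hy⟩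
    rw [hcon] at hmem
    exact hmem
  have hsub : ({y : Fin 3 → ℝ | eval y p ≠ 0} ∩ interior K)
      ⊆ Function.support f ∩ K := by
    rintro y ⟨hy1, hy2⟩
    exact ⟨mul_ne_zero hy1 hy1, interior_subset hy2⟩
  have hpos : 0 < volume (Function.support f ∩ K) :=
    lt_of_lt_of_le (hV.measure_pos volume hVne) (measure_mono hsub)
  have := hiff.mpr hpos
  rw [h] at this
  exact lt_irrefl 0 this

lemma ortho_decomp {K : Set (Fin 3 → ℝ)} (hcomp : IsCompact K)
    (hint : (interior K).Nonempty) (n2 n1 : ℕ) (hle : n2 ≤ n1)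
    (r : MvPolynomial (Fin 3) ℝ) (hr : r.totalDegree ≤ n1) :
    ∃ w r₁ : MvPolynomial (Fin 3) ℝ, w.totalDegree ≤ n2 ∧ r₁.totalDegree ≤ n1 ∧
      (∀ s : MvPolynomial (Fin 3) ℝ, s.totalDegree ≤ n2 →
        ∫ y in K, eval y r₁ * eval y s = 0) ∧ r = w + r₁ := by
  classical
  set V : Submodule ℝ (MvPolynomial (Fin 3) ℝ) := restrictTotalDegree (Fin 3) ℝ n1 with hV
  set W : Submodule ℝ V := Submodule.comap V.subtype (restrictTotalDegree (Fin 3) ℝ n2) with hW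
  have hBadd : ∀ (p1 p2 q : MvPolynomial (Fin 3) ℝ),
      ∫ y in K, eval y (p1 + p2) * eval y q
        = (∫ y in K, eval y p1 * eval y q) + ∫ y in K, eval y p2 * eval y q := by
    intro p1 p2 q
    rw [← integral_add (integrable_eval_mul hcomp p1 q) (integrable_eval_mul hcomp p2 q)]
    refine integral_congr_ae (Filter.Eventually.of_forall fun y => ?_)
    simp [add_mul]
  have hBsmul : ∀ (a : ℝ) (p q : MvPolynomial (Fin 3) ℝ),
      ∫ y in K, eval y (a • p) * eval y q = a * ∫ y in K, eval y p * eval y q := by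
    intro a p q
    rw [← integral_const_mul]
    refine integral_congr_ae (Filter.Eventually.of_forall fun y => ?_)
    simp [MvPolynomial.smul_eval, mul_assoc]
  have hBcomm : ∀ (p q : MvPolynomial (Fin 3) ℝ),
      ∫ y in K, eval y p * eval y q = ∫ y in K, eval y q * eval y p := by
    intro p q
    refine integral_congr_ae (Filter.Eventually.of_forall fun y => ?_)
    simp [mul_comm]
  set B : LinearMap.BilinForm ℝ V := LinearMap.mk₂ ℝ
    (fun p q : V => ∫ y in K, eval y (p : MvPolynomial (Fin 3) ℝ) * eval y (q : MvPolynomial (Fin 3) ℝ))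
    (fun p1 p2 q => by push_cast; exact hBadd p1 p2 q)
    (fun a p q => by push_cast; rw [smul_eq_mul]; exact hBsmul a p q)
    (fun p q1 q2 => by
      push_cast
      rw [hBcomm _ ((q1 : MvPolynomial (Fin 3) ℝ) + q2), hBadd, hBcomm (q1 : MvPolynomial (Fin 3) ℝ),
        hBcomm (q2 : MvPolynomial (Fin 3) ℝ)])
    (fun a p q => by
      push_cast
      rw [smul_eq_mul, hBcomm _ (a • (q : MvPolynomial (Fin 3) ℝ)), hBsmul, hBcomm]) with hB
  have hrefl : B.IsRefl := by
    intro p q hpq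
    show (∫ y in K, eval y (q : MvPolynomial (Fin 3) ℝ) * eval y (p : MvPolynomial (Fin 3) ℝ)) = 0
    rw [hBcomm]
    exact hpq
  have hnd : (B.restrict W).Nondegenerate := by
    refine ⟨fun w hw => ?_, fun w hw => ?_⟩
    all_goals
      have hww := hw w
      have : ((w : V) : MvPolynomial (Fin 3) ℝ) = 0 := by
        refine poly_eq_zero_of_integral_sq hcomp hint _ ?_
        exact hww
      ext1
      ext1
      exact this
  have hcompl := LinearMap.BilinForm.isCompl_orthogonal_of_restrict_nondegenerate hrefl hnd
  have hrV : r ∈ V := (mem_restrictTotalDegree _ n1 _).mpr hr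
  obtain ⟨w, z, hwmem, hzmem, hwz⟩ :=
    Submodule.codisjoint_iff_exists_add_eq.mp hcompl.codisjoint ⟨r, hrV⟩
  refine ⟨(w : MvPolynomial (Fin 3) ℝ), (z : MvPolynomial (Fin 3) ℝ), ?_, ?_, ?_, ?_⟩
  · exact (mem_restrictTotalDegree _ n2 _).mp (Submodule.mem_comap.mp hwmem)
  · exact (mem_restrictTotalDegree _ n1 _).mp z.2
  · intro s hs
    have hsV : s ∈ V := (mem_restrictTotalDegree _ n1 _).mpr (le_trans hs hle)
    have hsW : (⟨s, hsV⟩ : V) ∈ W :=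
      Submodule.mem_comap.mpr ((mem_restrictTotalDegree _ n2 _).mpr hs)
    have := hzmem ⟨s, hsV⟩ hsW
    change _ = 0 at this
    have h2 : (∫ y in K, eval y (((⟨s, hsV⟩ : V) : MvPolynomial (Fin 3) ℝ)) *
        eval y ((z : V) : MvPolynomial (Fin 3) ℝ)) = 0 := this
    rw [hBcomm] at h2
    exact h2
  · have : ((w : V) : MvPolynomial (Fin 3) ℝ) + ((z : V) : MvPolynomial (Fin 3) ℝ)
        = ((⟨r, hrV⟩ : V) : MvPolynomial (Fin 3) ℝ) := by
      rw [← Submodule.coe_add, hwz]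
    simpa using this.symm




def e3 : Fin 3 ≃ {t : Fin 4 // t ≠ 0} where
  toFun s := ⟨s.succ, Fin.succ_ne_zero s⟩
  invFun t := Fin.pred t.1 t.2
  left_inv s := by simp
  right_inv t := by
    ext
    simp

lemma affine_indep (x : Fin 4 → (Fin 3 → ℝ))
    (hnd : LinearIndependent ℝ ![x 1 - x 0, x 2 - x 0, x 3 - x 0]) :
    AffineIndependent ℝ x := by
  rw [affineIndependent_iff_linearIndependent_vsub ℝ x 0]
  have heq : (fun i : {t : Fin 4 // t ≠ 0} => x ↑i -ᵥ x 0) ∘ e3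
      = ![x 1 - x 0, x 2 - x 0, x 3 - x 0] := by
    funext s
    fin_cases s <;> rfl
  rw [← linearIndependent_equiv e3]
  rw [heq]
  exact hnd

lemma vsub_indep (x : Fin 4 → (Fin 3 → ℝ)) (hx : AffineIndependent ℝ x)
    (i j l m : Fin 4)
    (hil : i ≠ l) (him : i ≠ m) (hjl : j ≠ l) (hjm : j ≠ m) (hij : i ≠ j) (hlm : l ≠ m) :
    LinearIndependent ℝ (fun s : Fin 3 => x (![i, j, l] s) - x m) := by
  rw [affineIndependent_iff_linearIndependent_vsub ℝ x m] at hx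
  have hg : Function.Injective (fun s : Fin 3 => (⟨![i, j, l] s, by
      fin_cases s <;> simpa using by first | exact him | exact hjm | exact hlm⟩ :
      {t : Fin 4 // t ≠ m})) := by
    intro s1 s2 h
    simp only [Subtype.mk.injEq] at h
    fin_cases s1 <;> fin_cases s2 <;> simp_all
  have := hx.comp _ hg
  exact this

lemma spt_surj (x : Fin 4 → (Fin 3 → ℝ)) (i j l m : Fin 4)
    (hvind : LinearIndependent ℝ (fun s : Fin 3 => x (![i, j, l] s) - x m)) :
    ∀ y : Fin 3 → ℝ, ∃ z : Fin 3 → ℝ,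
      (fun c => x m c + ∑ t, z t * (x (![i, j, l] t) c - x m c)) = y := by
  intro y
  have hcard : Fintype.card (Fin 3) = Module.finrank ℝ (Fin 3 → ℝ) := by
    simp [Module.finrank_pi]
  let b := basisOfLinearIndependentOfCardEqFinrank hvind hcard
  refine ⟨fun t => b.repr (y - x m) t, ?_⟩
  have hsum : ∑ t, (b.repr (y - x m)) t • (x (![i, j, l] t) - x m) = y - x m := by
    have hs := b.sum_repr (y - x m)
    simp only [b, coe_basisOfLinearIndependentOfCardEqFinrank] at hs
    exact hs
  funext c
  have := congrFun hsum c
  rw [Finset.sum_apply] at this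
  simp only [Pi.smul_apply, Pi.sub_apply, smul_eq_mul] at this
  rw [this]
  ring

lemma interior_nonempty (x : Fin 4 → (Fin 3 → ℝ)) (hx : AffineIndependent ℝ x) :
    (interior (convexHull ℝ (Set.range x))).Nonempty := by
  rw [(convex_convexHull ℝ _).interior_nonempty_iff_affineSpan_eq_top, affineSpan_convexHull]
  rw [hx.affineSpan_eq_top_iff_card_eq_finrank_add_one]
  simp [Module.finrank_pi]




lemma eval_aeval' (g : σ → MvPolynomial σ ℝ) (z : σ → ℝ) (p : MvPolynomial σ ℝ) :
    eval z (aeval g p) = eval (fun c => eval z (g c)) p := by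
  have hhom : (eval z).comp ((aeval g : MvPolynomial σ ℝ →ₐ[ℝ] MvPolynomial σ ℝ) :
      MvPolynomial σ ℝ →+* MvPolynomial σ ℝ) = eval (fun c => eval z (g c)) := by
    apply MvPolynomial.ringHom_ext
    · intro r; simp
    · intro c; simp
  exact RingHom.congr_fun hhom p

lemma hc_pow (w : MvPolynomial σ ℝ) (hw : w.totalDegree ≤ 1) (n : ℕ) :
    homogeneousComponent n (w ^ n) = (homogeneousComponent 1 w) ^ n := by
  induction n with
  | zero =>
    simp [homogeneousComponent_zero]
  | succ n ih =>
    have hdeg : (w ^ n).totalDegree ≤ n := by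
      refine (totalDegree_pow _ _).trans ?_
      calc n * w.totalDegree ≤ n * 1 := Nat.mul_le_mul_left _ hw
      _ = n := by omega
    rw [pow_succ, pow_succ, ← ih, ← hc_mul hdeg hw]

lemma sum_smul_monomial_eq_zero {k : ℕ} (c : Fin (k+1) → ℝ)
    (h : ∑ α : Fin (k+1), c α • ((X 2 : MvPolynomial (Fin 3) ℝ) ^ (α:ℕ) * X 0 ^ (k - (α:ℕ))) = 0) :
    ∀ α, c α = 0 := by
  intro α₀
  have hmono : ∀ a b : ℕ, ((X 2 : MvPolynomial (Fin 3) ℝ) ^ a * X 0 ^ b)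
      = monomial (Finsupp.single 2 a + Finsupp.single 0 b) 1 := by
    intro a b
    rw [X_pow_eq_monomial, X_pow_eq_monomial, monomial_mul, one_mul]
  have hco := congrArg (coeff (Finsupp.single 2 (α₀:ℕ) + Finsupp.single 0 (k - (α₀:ℕ)))) h
  rw [MvPolynomial.coeff_sum, coeff_zero] at hco
  rw [Finset.sum_eq_single α₀] at hco
  · rw [coeff_smul, hmono, coeff_monomial, if_pos rfl, smul_eq_mul, mul_one] at hco
    exact hco
  · intro α _ hα
    rw [coeff_smul, hmono, coeff_monomial, if_neg, smul_eq_mul, mul_zero]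
    intro hh
    apply hα
    have h2 := congrFun (congrArg (fun d : Fin 3 →₀ ℕ => (d : Fin 3 → ℕ)) hh) 2
    simp only [Finsupp.coe_add, Pi.add_apply, Finsupp.single_apply] at h2
    have : (α : ℕ) = (α₀ : ℕ) := by
      simpa using h2
    exact Fin.ext this
  · intro hh
    exact absurd (Finset.mem_univ α₀) hh

lemma integral_eval_add_mul {K : Set (Fin 3 → ℝ)} (hcomp : IsCompact K)
    (p1 p2 q : MvPolynomial (Fin 3) ℝ) :
    ∫ y in K, eval y (p1 + p2) * eval y q
      = (∫ y in K, eval y p1 * eval y q) + ∫ y in K, eval y p2 * eval y q := by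
  rw [← integral_add (integrable_eval_mul hcomp p1 q) (integrable_eval_mul hcomp p2 q)]
  refine integral_congr_ae (Filter.Eventually.of_forall fun y => ?_)
  simp [add_mul]

end ShapeAux

open ShapeAux in
/-- Direct sum decomposition of the shape function component space
`P_{ij} = P_k ⊕ (λ_i−λ_j)·span{λ_ℓ^aλ_m^b : a+b=k} ⊕ λ_iλ_j P_{k−2}^⊥` on a
nondegenerate tetrahedron. -/
theorem shape_space_direct_sum_decomposition
    (k : ℕ) (hk : 1 ≤ k)
    (x : Fin 4 → (Fin 3 → ℝ))
    (hnd : LinearIndependent ℝ ![x 1 - x 0, x 2 - x 0, x 3 - x 0])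
    (K : Set (Fin 3 → ℝ)) (hK : K = convexHull ℝ (Set.range x))
    (lam : Fin 4 → MvPolynomial (Fin 3) ℝ)
    (hdeg : ∀ i, (lam i).totalDegree ≤ 1)
    (hlam : ∀ i j, eval (x j) (lam i) = if i = j then (1 : ℝ) else 0)
    (hsum : ∑ i, lam i = 1)
    (i j l m : Fin 4)
    (hij : i ≠ j) (hil : i ≠ l) (him : i ≠ m) (hjl : j ≠ l) (hjm : j ≠ m)
    (hlm : l ≠ m)
    (A B C C' : Submodule ℝ (MvPolynomial (Fin 3) ℝ))
    (hA : A = restrictTotalDegree (Fin 3) ℝ k)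
    (hB : B = Submodule.span ℝ
      {q | ∃ a b : ℕ, a + b = k ∧ q = (lam i - lam j) * lam l ^ a * lam m ^ b})
    (hC : C = Submodule.span ℝ
      {q | ∃ r : MvPolynomial (Fin 3) ℝ, r.totalDegree ≤ k - 1 ∧
        q = lam i * lam j * r})
    (hC' : C' = Submodule.span ℝ
      {q | ∃ r : MvPolynomial (Fin 3) ℝ, r.totalDegree ≤ k - 1 ∧
        (∀ s : MvPolynomial (Fin 3) ℝ, (s.totalDegree : ℤ) ≤ (k : ℤ) - 2 →
          ∫ y in K, eval y r * eval y s = 0) ∧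
        q = lam i * lam j * r}) :
    A ⊔ B ⊔ C = A ⊔ B ⊔ C' ∧
    ∀ a ∈ A, ∀ b ∈ B, ∀ c ∈ C',
      a + b + c = 0 → a = 0 ∧ b = 0 ∧ c = 0 := by
  classical
  -- geometry
  have haff : AffineIndependent ℝ x := affine_indep x hnd
  have hKcomp : IsCompact K := hK ▸ (Set.finite_range x).isCompact_convexHull ℝ
  have hKint : (interior K).Nonempty := hK ▸ interior_nonempty x haff
  have hvind := vsub_indep x haff i j l m hil him hjl hjm hij hlm
  set idx : Fin 3 → Fin 4 := ![i, j, l] with hidx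
  set Spt : (Fin 3 → ℝ) → (Fin 3 → ℝ) :=
    fun z c => x m c + ∑ t, z t * (x (idx t) c - x m c) with hSpt
  have hSptSurj : ∀ y, ∃ z, Spt z = y := spt_surj x i j l m hvind
  have hlamSpt : ∀ s z, eval (Spt z) (lam s)
      = eval (x m) (lam s) + ∑ t, z t * (eval (x (idx t)) (lam s) - eval (x m) (lam s)) :=
    fun s z => eval_affine_comb (lam s) (hdeg s) (x m) (fun t => x (idx t)) z
  have hidx0 : idx 0 = i := rfl
  have hidx1 : idx 1 = j := rfl
  have hidx2 : idx 2 = l := rfl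
  have hlamI : ∀ z, eval (Spt z) (lam i) = z 0 := by
    intro z
    rw [hlamSpt, Fin.sum_univ_three, hidx0, hidx1, hidx2,
      hlam i m, hlam i i, hlam i j, hlam i l,
      if_neg him, if_pos rfl, if_neg hij, if_neg hil]
    ring
  have hlamJ : ∀ z, eval (Spt z) (lam j) = z 1 := by
    intro z
    rw [hlamSpt, Fin.sum_univ_three, hidx0, hidx1, hidx2,
      hlam j m, hlam j i, hlam j j, hlam j l,
      if_neg hjm, if_pos rfl, if_neg (Ne.symm hij), if_neg hjl]
    ring
  have hlamL : ∀ z, eval (Spt z) (lam l) = z 2 := by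
    intro z
    rw [hlamSpt, Fin.sum_univ_three, hidx0, hidx1, hidx2,
      hlam l m, hlam l i, hlam l j, hlam l l,
      if_neg hlm, if_pos rfl, if_neg (Ne.symm hil), if_neg (Ne.symm hjl)]
    ring
  have hlamM : ∀ z, eval (Spt z) (lam m) = 1 - z 0 - z 1 - z 2 := by
    intro z
    rw [hlamSpt, Fin.sum_univ_three, hidx0, hidx1, hidx2,
      hlam m m, hlam m i, hlam m j, hlam m l,
      if_pos rfl, if_neg (Ne.symm him), if_neg (Ne.symm hjm), if_neg (Ne.symm hlm)]
    ring
  -- the substitution algebra maps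
  set Sg : Fin 3 → MvPolynomial (Fin 3) ℝ :=
    fun c => MvPolynomial.C (x m c) + ∑ t, MvPolynomial.C (x (idx t) c - x m c) * X t with hSg
  have hSgdeg : ∀ c, (Sg c).totalDegree ≤ 1 := by
    intro c
    refine (totalDegree_add _ _).trans (max_le (by simp [totalDegree_C]) ?_)
    refine (totalDegree_finset_sum _ _).trans (Finset.sup_le fun t _ => ?_)
    refine (totalDegree_mul _ _).trans ?_
    rw [totalDegree_C, totalDegree_X]
  have hSgeval : ∀ z c, eval z (Sg c) = Spt z c := by
    intro z c
    simp [hSg, hSpt, mul_comm]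
  set ψ : MvPolynomial (Fin 3) ℝ →ₐ[ℝ] MvPolynomial (Fin 3) ℝ := aeval Sg with hψ
  have hψeval : ∀ z p, eval z (ψ p) = eval (Spt z) p := by
    intro z p
    rw [hψ, eval_aeval']
    have hfun : (fun c => eval z (Sg c)) = Spt z := funext (hSgeval z)
    rw [hfun]
  set χ : MvPolynomial (Fin 3) ℝ →ₐ[ℝ] MvPolynomial (Fin 3) ℝ :=
    aeval (fun t => lam (idx t)) with hχ
  set Tpt : (Fin 3 → ℝ) → (Fin 3 → ℝ) := fun y t => eval y (lam (idx t)) with hTpt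
  have hχeval : ∀ y p, eval y (χ p) = eval (Tpt y) p := by
    intro y p
    rw [hχ, eval_aeval']
  have hTptSpt : ∀ z, Tpt (Spt z) = z := by
    intro z
    funext t
    fin_cases t
    · exact hlamI z
    · exact hlamJ z
    · exact hlamL z
  have hSptTpt : ∀ y, Spt (Tpt y) = y := by
    intro y
    obtain ⟨z, rfl⟩ := hSptSurj y
    rw [hTptSpt]
  have hχψ : ∀ p, χ (ψ p) = p := by
    intro p
    refine MvPolynomial.funext fun y => ?_
    rw [hχeval, hψeval, hSptTpt]
  have hψi : ψ (lam i) = X 0 := by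
    refine MvPolynomial.funext fun z => ?_
    rw [hψeval, hlamI, eval_X]
  have hψj : ψ (lam j) = X 1 := by
    refine MvPolynomial.funext fun z => ?_
    rw [hψeval, hlamJ, eval_X]
  have hψl : ψ (lam l) = X 2 := by
    refine MvPolynomial.funext fun z => ?_
    rw [hψeval, hlamL, eval_X]
  have hψm : ψ (lam m) = MvPolynomial.C 1 - X 0 - X 1 - X 2 := by
    refine MvPolynomial.funext fun z => ?_
    rw [hψeval, hlamM]
    simp
  have hψdeg : ∀ p : MvPolynomial (Fin 3) ℝ, (ψ p).totalDegree ≤ p.totalDegree :=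
    totalDegree_aeval_le Sg hSgdeg
  have hχdeg : ∀ p : MvPolynomial (Fin 3) ℝ, (χ p).totalDegree ≤ p.totalDegree :=
    totalDegree_aeval_le _ (fun t => hdeg (idx t))
  -- abbreviations for the homogeneous computations
  set Y3 : MvPolynomial (Fin 3) ℝ := MvPolynomial.C 1 - X 0 - X 1 - X 2 with hY3
  have hY3deg : Y3.totalDegree ≤ 1 := hψm ▸ le_trans (hψdeg (lam m)) (hdeg m)
  have hcY : homogeneousComponent 1 Y3 = 0 - X 0 - X 1 - X 2 := by
    rw [hY3, map_sub, map_sub, map_sub,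
      hc_of_isHomogeneous_ne (isHomogeneous_C _ _) one_ne_zero,
      hc_of_isHomogeneous (isHomogeneous_X ℝ 0),
      hc_of_isHomogeneous (isHomogeneous_X ℝ 1),
      hc_of_isHomogeneous (isHomogeneous_X ℝ 2)]
  set W3 : MvPolynomial (Fin 3) ℝ := 0 - X 0 - X 1 - X 2 with hW3
  have hterm : ∀ n : ℕ, n ≤ k →
      homogeneousComponent (k+1) ((X 0 - X 1) * X 2 ^ n * Y3 ^ (k - n))
        = ((X 0 - X 1) * X 2 ^ n) * W3 ^ (k - n) := by
    intro n hn
    have hfhom : ((X 0 - X 1) * X 2 ^ n : MvPolynomial (Fin 3) ℝ).IsHomogeneous (1 + n) := by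
      have h1 : ((X 0 - X 1) : MvPolynomial (Fin 3) ℝ).IsHomogeneous 1 :=
        (isHomogeneous_X ℝ 0).sub (isHomogeneous_X ℝ 1)
      have h2 : ((X 2 : MvPolynomial (Fin 3) ℝ) ^ n).IsHomogeneous n := by
        simpa using (isHomogeneous_X ℝ 2).pow n
      exact h1.mul h2
    have hfdeg : ((X 0 - X 1) * X 2 ^ n : MvPolynomial (Fin 3) ℝ).totalDegree ≤ 1 + n :=
      hfhom.totalDegree_le
    have hgdeg : (Y3 ^ (k - n)).totalDegree ≤ k - n := by
      refine (totalDegree_pow _ _).trans ?_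
      calc (k - n) * Y3.totalDegree ≤ (k - n) * 1 := Nat.mul_le_mul_left _ hY3deg
      _ = k - n := by omega
    have hmulassoc : (X 0 - X 1) * X 2 ^ n * Y3 ^ (k - n)
        = ((X 0 - X 1) * X 2 ^ n) * Y3 ^ (k - n) := rfl
    have hksplit : k + 1 = (1 + n) + (k - n) := by omega
    rw [hmulassoc, hksplit, hc_mul hfdeg hgdeg, hc_of_isHomogeneous hfhom,
      hc_pow Y3 hY3deg, hcY]
  constructor
  · -- span equality
    apply le_antisymm
    · refine sup_le le_sup_left ?_
      rw [hC]
      refine Submodule.span_le.mpr ?_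
      rintro q ⟨r, hrdeg, rfl⟩
      by_cases hk1 : k = 1
      · refine Submodule.mem_sup_right ?_
        rw [hC']
        refine Submodule.subset_span ⟨r, hrdeg, fun s hs => ?_, rfl⟩
        exfalso
        subst hk1
        have : (0 : ℤ) ≤ (s.totalDegree : ℤ) := Int.natCast_nonneg _
        omega
      · have hk2 : 2 ≤ k := by omega
        obtain ⟨w, r₁, hw, hr₁, hortho, rfl⟩ :=
          ortho_decomp hKcomp hKint (k-2) (k-1) (by omega) r hrdeg
        rw [mul_add]
        refine Submodule.add_mem _ (Submodule.mem_sup_left (Submodule.mem_sup_left ?_))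
          (Submodule.mem_sup_right ?_)
        · rw [hA]
          rw [mem_restrictTotalDegree]
          refine (totalDegree_mul _ _).trans ?_
          have h1 : (lam i * lam j).totalDegree ≤ 2 :=
            (totalDegree_mul _ _).trans (by have := hdeg i; have := hdeg j; omega)
          omega
        · rw [hC']
          refine Submodule.subset_span ⟨r₁, hr₁, fun s hs => hortho s ?_, rfl⟩
          omega
    · refine sup_le le_sup_left ?_
      rw [hC', hC]
      refine le_trans (Submodule.span_mono ?_) le_sup_right
      rintro q ⟨r, h1, _, rfl⟩
      exact ⟨r, h1, rfl⟩
  · -- independence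
    intro a ha b hb c hc habc
    -- representation of b
    have hBset : {q | ∃ a b : ℕ, a + b = k ∧ q = (lam i - lam j) * lam l ^ a * lam m ^ b}
        = Set.range (fun α : Fin (k+1) =>
            (lam i - lam j) * lam l ^ (α:ℕ) * lam m ^ (k - (α:ℕ))) := by
      ext q
      constructor
      · rintro ⟨a', b', hab, rfl⟩
        refine ⟨⟨a', by omega⟩, ?_⟩
        have : k - a' = b' := by omega
        simp [this]
      · rintro ⟨α, rfl⟩
        exact ⟨(α:ℕ), k - (α:ℕ), by have := α.isLt; omega, rfl⟩
    rw [hB, hBset] at hb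
    obtain ⟨cf, hcf⟩ := (Submodule.mem_span_range_iff_exists_fun ℝ).mp hb
    -- representation of c
    set Rcar : Submodule ℝ (MvPolynomial (Fin 3) ℝ) :=
      { carrier := {r | r.totalDegree ≤ k - 1 ∧
          ∀ s : MvPolynomial (Fin 3) ℝ, (s.totalDegree : ℤ) ≤ (k:ℤ) - 2 →
            ∫ y in K, eval y r * eval y s = 0},
        add_mem' := by
          rintro p1 p2 ⟨h1d, h1o⟩ ⟨h2d, h2o⟩
          refine ⟨(totalDegree_add _ _).trans (max_le h1d h2d), fun s hs => ?_⟩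
          rw [integral_eval_add_mul hKcomp, h1o s hs, h2o s hs, add_zero]
        zero_mem' := by
          refine ⟨by simp, fun s hs => ?_⟩
          simp
        smul_mem' := by
          rintro t p ⟨hd, ho⟩
          refine ⟨le_trans (totalDegree_smul_le _ _) hd, fun s hs => ?_⟩
          have : (∫ y in K, eval y (t • p) * eval y s)
              = t * ∫ y in K, eval y p * eval y s := by
            rw [← integral_const_mul]
            refine integral_congr_ae (Filter.Eventually.of_forall fun y => ?_)
            simp [MvPolynomial.smul_eval, mul_assoc]
          rw [this, ho s hs, mul_zero] } with hRcar
    have hC'map : C' = Submodule.map (LinearMap.mulLeft ℝ (lam i * lam j)) Rcar := by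
      rw [hC']
      have hset : {q | ∃ r : MvPolynomial (Fin 3) ℝ, r.totalDegree ≤ k - 1 ∧
          (∀ s : MvPolynomial (Fin 3) ℝ, (s.totalDegree : ℤ) ≤ (k : ℤ) - 2 →
            ∫ y in K, eval y r * eval y s = 0) ∧
          q = lam i * lam j * r}
          = (LinearMap.mulLeft ℝ (lam i * lam j)) '' (Rcar : Set (MvPolynomial (Fin 3) ℝ)) := by
        ext q
        constructor
        · rintro ⟨r, h1, h2, rfl⟩
          exact ⟨r, ⟨h1, h2⟩, rfl⟩
        · rintro ⟨r, ⟨h1, h2⟩, rfl⟩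
          exact ⟨r, h1, h2, rfl⟩
      rw [hset, ← Submodule.map_span, Submodule.span_eq]
    rw [hC'map] at hc
    obtain ⟨r, hrmem, rfl⟩ := Submodule.mem_map.mp hc
    obtain ⟨hrdeg, hrortho⟩ := hrmem
    rw [LinearMap.mulLeft_apply] at habc ⊢
    -- apply ψ
    have hψb : ψ b = ∑ α : Fin (k+1),
        cf α • ((X 0 - X 1) * X 2 ^ (α:ℕ) * Y3 ^ (k - (α:ℕ))) := by
      rw [← hcf, map_sum]
      refine Finset.sum_congr rfl fun α _ => ?_
      rw [_root_.map_smul, map_mul, map_mul, map_sub, map_pow, map_pow, hψi, hψj, hψl, hψm]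
    have hψeq : ψ a + (∑ α : Fin (k+1),
        cf α • ((X 0 - X 1) * X 2 ^ (α:ℕ) * Y3 ^ (k - (α:ℕ))))
        + X 0 * X 1 * ψ r = 0 := by
      have h0 := congrArg ψ habc
      rw [map_zero, map_add, map_add, hψb, map_mul, map_mul, hψi, hψj] at h0
      exact h0
    -- homogeneous component k+1
    have hψadeg : (ψ a).totalDegree ≤ k := by
      refine le_trans (hψdeg a) ?_
      rw [hA] at ha
      exact (mem_restrictTotalDegree _ k a).mp ha
    have hψrdeg : (ψ r).totalDegree ≤ k - 1 := le_trans (hψdeg r) hrdeg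
    have hhc := congrArg (homogeneousComponent (k+1)) hψeq
    rw [map_zero, map_add, map_add, map_sum] at hhc
    rw [homogeneousComponent_eq_zero (k+1) (ψ a) (by omega)] at hhc
    have hX01 : ((X 0 * X 1 : MvPolynomial (Fin 3) ℝ)).IsHomogeneous 2 := by
      simpa using (isHomogeneous_X ℝ 0).mul (isHomogeneous_X ℝ 1)
    have hlast : homogeneousComponent (k+1) (X 0 * X 1 * ψ r)
        = X 0 * X 1 * homogeneousComponent (k-1) (ψ r) := by
      have hsplit : k + 1 = 2 + (k - 1) := by omega
      rw [hsplit, hc_mul hX01.totalDegree_le hψrdeg, hc_of_isHomogeneous hX01]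
    rw [hlast] at hhc
    have hsumeq : ∀ α : Fin (k+1),
        homogeneousComponent (k+1)
          (cf α • ((X 0 - X 1) * X 2 ^ (α:ℕ) * Y3 ^ (k - (α:ℕ))))
        = cf α • (((X 0 - X 1) * X 2 ^ (α:ℕ)) * W3 ^ (k - (α:ℕ))) := by
      intro α
      rw [_root_.map_smul, hterm (α:ℕ) (by have := α.isLt; omega)]
    rw [Finset.sum_congr rfl (fun α _ => hsumeq α), zero_add] at hhc
    -- substitute X 1 ↦ 0
    set π : MvPolynomial (Fin 3) ℝ →ₐ[ℝ] MvPolynomial (Fin 3) ℝ :=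
      aeval (fun t : Fin 3 => if t = 1 then 0 else X t) with hπdef
    have hπ0 : π (X 0) = X 0 := by simp [hπdef]
    have hπ1 : π (X 1) = 0 := by simp [hπdef]
    have hπ2 : π (X 2) = X 2 := by simp [hπdef]
    have hπeq := congrArg π hhc
    rw [map_zero, map_add, map_sum] at hπeq
    rw [show π (X 0 * X 1 * homogeneousComponent (k-1) (ψ r)) = 0 by
      rw [map_mul, map_mul, hπ1]; ring] at hπeq
    have hπterm : ∀ α : Fin (k+1),
        π (cf α • (((X 0 - X 1) * X 2 ^ (α:ℕ)) * W3 ^ (k - (α:ℕ))))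
        = cf α • (X 0 * (X 2 ^ (α:ℕ) * (0 - X 0 - 0 - X 2) ^ (k - (α:ℕ)))) := by
      intro α
      rw [_root_.map_smul, map_mul, map_mul, map_pow, map_sub, map_pow,
        map_sub, map_sub, map_sub, map_zero, hπ0, hπ1, hπ2]
      congr 1
      ring
    rw [Finset.sum_congr rfl (fun α _ => hπterm α), add_zero] at hπeq
    have hfactor : ∑ α : Fin (k+1),
        cf α • ((X 0 : MvPolynomial (Fin 3) ℝ) * (X 2 ^ (α:ℕ) * (0 - X 0 - 0 - X 2) ^ (k - (α:ℕ))))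
        = X 0 * ∑ α : Fin (k+1),
            cf α • ((X 2 : MvPolynomial (Fin 3) ℝ) ^ (α:ℕ) * (0 - X 0 - 0 - X 2) ^ (k - (α:ℕ))) := by
      rw [Finset.mul_sum]
      refine Finset.sum_congr rfl fun α _ => ?_
      rw [mul_smul_comm]
    rw [hfactor] at hπeq
    have hG : (∑ α : Fin (k+1),
        cf α • ((X 2 : MvPolynomial (Fin 3) ℝ) ^ (α:ℕ)
          * (0 - X 0 - 0 - X 2) ^ (k - (α:ℕ)))) = 0 := by
      rcases mul_eq_zero.mp hπeq with h | h
      · exact absurd h (X_ne_zero 0)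
      · exact h
    -- substitute X 0 ↦ -X0 - X2
    set ρ : MvPolynomial (Fin 3) ℝ →ₐ[ℝ] MvPolynomial (Fin 3) ℝ :=
      aeval (fun t : Fin 3 => if t = 0 then -X 0 - X 2 else X t) with hρdef
    have hρ0 : ρ (X 0) = -X 0 - X 2 := by simp [hρdef]
    have hρ2 : ρ (X 2) = X 2 := by simp [hρdef]
    have hρG := congrArg ρ hG
    rw [map_zero, map_sum] at hρG
    have hρterm : ∀ α : Fin (k+1),
        ρ (cf α • ((X 2 : MvPolynomial (Fin 3) ℝ) ^ (α:ℕ)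
          * (0 - X 0 - 0 - X 2) ^ (k - (α:ℕ))))
        = cf α • ((X 2 : MvPolynomial (Fin 3) ℝ) ^ (α:ℕ) * X 0 ^ (k - (α:ℕ))) := by
      intro α
      rw [_root_.map_smul, map_mul, map_pow, map_pow, map_sub, map_sub, map_sub, map_zero,
        hρ0, hρ2]
      have : (0 - (-X 0 - X 2) - 0 - X 2 : MvPolynomial (Fin 3) ℝ) = X 0 := by ring
      rw [this]
    rw [Finset.sum_congr rfl (fun α _ => hρterm α)] at hρG
    have hcf0 : ∀ α, cf α = 0 := sum_smul_monomial_eq_zero cf hρG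
    -- conclude b = 0
    have hb0 : b = 0 := by
      rw [← hcf]
      refine Finset.sum_eq_zero fun α _ => ?_
      rw [hcf0 α, zero_smul]
    -- conclude hc (k-1) (ψ r) = 0
    have hsum0 : ∑ α : Fin (k+1),
        cf α • (((X 0 - X 1) * X 2 ^ (α:ℕ)) * W3 ^ (k - (α:ℕ))) = 0 := by
      refine Finset.sum_eq_zero fun α _ => ?_
      rw [hcf0 α, zero_smul]
    rw [hsum0, zero_add] at hhc
    have hR0 : homogeneousComponent (k-1) (ψ r) = 0 := by
      rcases mul_eq_zero.mp hhc with h | h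
      · exact absurd h (mul_ne_zero (X_ne_zero 0) (X_ne_zero 1))
      · exact h
    -- conclude r = 0
    have hr0 : r = 0 := by
      by_cases hk1 : k = 1
      · subst hk1
        have h1 : (ψ r).totalDegree ≤ 0 := by simpa using hψrdeg
        have := eq_zero_of_deg_le_zero_hc h1 (by simpa using hR0)
        rw [← hχψ r, this, map_zero]
      · have hk2 : 2 ≤ k := by omega
        have h1 : (ψ r).totalDegree ≤ k - 2 := by
          have := deg_le_of_hc_eq_zero hψrdeg hR0
          omega
        have hrd : r.totalDegree ≤ k - 2 := by
          calc r.totalDegree = (χ (ψ r)).totalDegree := by rw [hχψ]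
          _ ≤ (ψ r).totalDegree := hχdeg _
          _ ≤ k - 2 := h1
        have hint0 := hrortho r (by push_cast; omega)
        exact poly_eq_zero_of_integral_sq hKcomp hKint r hint0
    have hc0 : lam i * lam j * r = 0 := by rw [hr0, mul_zero]
    refine ⟨?_, hb0, hc0⟩
    rw [hb0, hc0, add_zero, add_zero] at habc
    exact habc
end

section
/- For a nondegenerate triangle Δ ⊂ ℝ² with barycentric coordinates λ₁,λ₂,λ₃ and edge vectors t_{i,j}, any symmetric-matrix-valued polynomial τ ∈ P_k(Δ; 𝕊₂) whose normal trace τν vanishes on all of ∂Δ belongs to the bubble space H_{Δ,k,b} = Σ_{1≤i<j≤3} λ_iλ_j P_{k−2}(Δ;ℝ) t_{i,j}t_{i,j}^T; conversely every element of H_{Δ,k,b} has vanishing normal trace on ∂Δ. That is, H_{Δ,k,b} = {τ ∈ P_k(Δ;𝕊₂) : τν|_{∂Δ} = 0}. -/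
open Matrix MvPolynomial



lemma fin2_deg_le_one {m : Fin 2 →₀ ℕ} (h : (m.sum fun _ e => e) ≤ 1) :
    m = 0 ∨ m = Finsupp.single 0 1 ∨ m = Finsupp.single 1 1 := by
  rw [Finsupp.sum_fintype _ _ (fun _ => rfl)] at h
  rw [Fin.sum_univ_two] at h
  have : (m 0 = 0 ∧ m 1 = 0) ∨ (m 0 = 1 ∧ m 1 = 0) ∨ (m 0 = 0 ∧ m 1 = 1) := by omega
  rcases this with ⟨h0, h1⟩ | ⟨h0, h1⟩ | ⟨h0, h1⟩
  · left; ext a; fin_cases a <;> simp [h0, h1]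
  · right; left; ext a; fin_cases a <;> simp [Finsupp.single_apply, h0, h1]
  · right; right; ext a; fin_cases a <;> simp [Finsupp.single_apply, h0, h1]

lemma rep1 (p : MvPolynomial (Fin 2) ℝ) (h : p.totalDegree ≤ 1) :
    p = C (coeff 0 p) + C (coeff (Finsupp.single 0 1) p) * X 0
        + C (coeff (Finsupp.single 1 1) p) * X 1 := by
  apply MvPolynomial.ext
  intro m
  rw [coeff_add, coeff_add, coeff_C, coeff_C_mul, coeff_C_mul, coeff_X', coeff_X']
  have hne : (Finsupp.single 0 1 : Fin 2 →₀ ℕ) ≠ Finsupp.single 1 1 := by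
    intro hcon
    have := DFunLike.congr_fun hcon 0
    simp [Finsupp.single_apply] at this
  by_cases h0 : m = 0
  · subst h0
    simp [(by simp [Finsupp.single_eq_zero] : ¬ (Finsupp.single (0:Fin 2) 1 = 0)),
      (by simp [Finsupp.single_eq_zero] : ¬ (Finsupp.single (1:Fin 2) 1 = 0))]
  by_cases h1 : m = Finsupp.single 0 1
  · subst h1
    simp [Ne.symm (by simp [Finsupp.single_eq_zero] : ¬ (Finsupp.single (0:Fin 2) 1 = 0)), hne, Ne.symm hne]
  by_cases h2 : m = Finsupp.single 1 1
  · subst h2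
    simp [Ne.symm (by simp [Finsupp.single_eq_zero] : ¬ (Finsupp.single (1:Fin 2) 1 = 0)),
      hne, Ne.symm hne]
  · have hm : coeff m p = 0 := by
      by_contra hc
      have hmem : m ∈ p.support := by simpa [mem_support_iff] using hc
      have hle : (m.sum fun _ e => e) ≤ p.totalDegree := le_totalDegree hmem
      have := fin2_deg_le_one (le_trans hle h)
      tauto
    rw [if_neg (fun hcon => h1 (Eq.symm hcon)), if_neg (fun hcon => h2 (Eq.symm hcon)),
      if_neg (fun hcon => h0 (Eq.symm hcon)), hm]
    simp

lemma eval_comb {p : MvPolynomial (Fin 2) ℝ} (h : p.totalDegree ≤ 1) (a b : ℝ)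
    (hab : a + b = 1) (u v : Fin 2 → ℝ) :
    eval (a • u + b • v) p = a * eval u p + b * eval v p := by
  rw [rep1 p h]
  simp only [map_add, _root_.map_mul, eval_C, eval_X, Pi.add_apply, Pi.smul_apply, smul_eq_mul]
  linear_combination (-(coeff 0 p)) * hab


lemma eval_aeval' (f : Fin 2 → MvPolynomial (Fin 2) ℝ) (z : Fin 2 → ℝ)
    (p : MvPolynomial (Fin 2) ℝ) :
    eval z (aeval f p) = eval (fun a => eval z (f a)) p := by
  rw [aeval_def, MvPolynomial.algebraMap_eq, ← eval_assoc]
  rfl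

lemma hcomp_ne {p : MvPolynomial (Fin 2) ℝ} (hp : p ≠ 0) :
    homogeneousComponent p.totalDegree p ≠ 0 := by
  obtain ⟨m, hm, hdeg⟩ := p.support.exists_mem_eq_sup
    (Finset.nonempty_iff_ne_empty.mpr (by rwa [Ne, support_eq_empty])) (fun m => (m.sum fun _ e => e))
  intro h0
  have hc : coeff m (homogeneousComponent p.totalDegree p) = coeff m p := by
    rw [coeff_homogeneousComponent, if_pos]
    show m.degree = _
    rw [MvPolynomial.totalDegree, hdeg]
    simp [Finsupp.degree, Finsupp.sum]
    rfl
  rw [h0] at hc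
  simp only [coeff_zero] at hc
  exact (mem_support_iff.mp hm) hc.symm

lemma hc_mul (p q : MvPolynomial (Fin 2) ℝ) (dp dq : ℕ)
    (hdp : p.totalDegree = dp) (hdq : q.totalDegree = dq) :
    homogeneousComponent (dp + dq) (p * q)
      = homogeneousComponent dp p * homogeneousComponent dq q := by
  have hp' : p = ∑ i ∈ Finset.range (dp + 1), homogeneousComponent i p := by
    have := (sum_homogeneousComponent p).symm
    rwa [hdp] at this
  have hq' : q = ∑ j ∈ Finset.range (dq + 1), homogeneousComponent j q := by
    have := (sum_homogeneousComponent q).symm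
    rwa [hdq] at this
  have hsplit : p * q = ∑ i ∈ Finset.range (dp + 1), ∑ j ∈ Finset.range (dq + 1),
      homogeneousComponent i p * homogeneousComponent j q := by
    rw [← Finset.sum_mul_sum, ← hp', ← hq']
  rw [hsplit, map_sum, Finset.sum_eq_single dp]
  · rw [map_sum, Finset.sum_eq_single dq]
    · rw [homogeneousComponent_of_mem
        ((homogeneousComponent_isHomogeneous dp p).mul
          (homogeneousComponent_isHomogeneous dq q)), if_pos rfl]
    · intro j hj hjne
      rw [Finset.mem_range] at hj
      rw [homogeneousComponent_of_mem
        ((homogeneousComponent_isHomogeneous dp p).mul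
          (homogeneousComponent_isHomogeneous j q)), if_neg (by omega)]
    · intro hmem
      exact absurd (Finset.self_mem_range_succ _) hmem
  · intro i hi hine
    rw [Finset.mem_range] at hi
    rw [map_sum, Finset.sum_eq_zero]
    intro j hj
    rw [Finset.mem_range] at hj
    rw [homogeneousComponent_of_mem
      ((homogeneousComponent_isHomogeneous i p).mul
        (homogeneousComponent_isHomogeneous j q)), if_neg (by omega)]
  · intro hmem
    exact absurd (Finset.self_mem_range_succ _) hmem

lemma tdeg_mul {p q : MvPolynomial (Fin 2) ℝ} (hp : p ≠ 0) (hq : q ≠ 0) :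
    (p * q).totalDegree = p.totalDegree + q.totalDegree := by
  refine le_antisymm (totalDegree_mul p q) ?_
  by_contra hlt
  push_neg at hlt
  have hz : homogeneousComponent (p.totalDegree + q.totalDegree) (p * q) = 0 :=
    homogeneousComponent_eq_zero _ _ hlt
  rw [hc_mul p q _ _ rfl rfl] at hz
  exact (mul_ne_zero (hcomp_ne hp) (hcomp_ne hq)) hz


lemma X1_dvd {p : MvPolynomial (Fin 2) ℝ}
    (h : ∀ t : ℝ, 0 ≤ t → t ≤ 1/2 → eval ![t, 0] p = 0) :
    (X 1 : MvPolynomial (Fin 2) ℝ) ∣ p := by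
  have hev : ∀ t : ℝ, Polynomial.eval t (eval₂ Polynomial.C ![Polynomial.X, 0] p)
      = eval ![t, 0] p := by
    intro t
    rw [polynomial_eval_eval₂]
    have h1 : (Polynomial.evalRingHom t).comp Polynomial.C = RingHom.id ℝ := by
      ext r; simp
    rw [h1, eval₂_id]
    have h2 : (fun s => Polynomial.eval t (![Polynomial.X, 0] s)) = ![t, 0] := by
      funext s; fin_cases s <;> simp
    rw [h2]
  have hψ0 : (eval₂ Polynomial.C ![Polynomial.X, 0] p) = 0 := by
    apply Polynomial.eq_zero_of_infinite_isRoot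
    apply Set.Infinite.mono (s := Set.Icc (0:ℝ) (1/2))
    · intro t ht
      simp only [Set.mem_setOf_eq, Polynomial.IsRoot]
      rw [hev]
      exact h t ht.1 ht.2
    · exact Set.Icc_infinite (by norm_num)
  have hall : ∀ t : ℝ, eval ![t, 0] p = 0 := by
    intro t
    rw [← hev, hψ0, Polynomial.eval_zero]
  have hsub : aeval ![(X 0 : MvPolynomial (Fin 2) ℝ), 0] p = 0 := by
    apply MvPolynomial.funext
    intro z
    rw [eval_aeval']
    have : (fun a => eval z (![(X 0 : MvPolynomial (Fin 2) ℝ), 0] a)) = ![z 0, 0] := by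
      funext a; fin_cases a <;> simp
    rw [this, hall, map_zero]
  have key : ∀ r : MvPolynomial (Fin 2) ℝ, (X 1 : MvPolynomial (Fin 2) ℝ) ∣ r - aeval ![X 0, 0] r := by
    intro r
    induction r using MvPolynomial.induction_on with
    | C a => simp [aeval_C]
    | add r s hr hs =>
      rw [map_add]
      have := dvd_add hr hs
      convert this using 1
      ring
    | mul_X r n hr =>
      rw [_root_.map_mul, aeval_X]
      fin_cases n <;>
        simp only [Fin.zero_eta, Fin.mk_one, Fin.isValue, Matrix.cons_val_zero,
          Matrix.cons_val_one, Matrix.head_cons]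
      · rw [← sub_mul]
        exact hr.mul_right _
      · rw [mul_zero, sub_zero]
        exact dvd_mul_left _ _
  have := key p
  rwa [hsub, sub_zero] at this


lemma div_lemma (xi xj xm : Fin 2 → ℝ) (lam : MvPolynomial (Fin 2) ℝ)
    (hdeg : lam.totalDegree ≤ 1) (hi : eval xi lam = 0) (hj : eval xj lam = 0)
    (hm : eval xm lam = 1)
    (he : (xj 0 - xi 0) * (xm 1 - xi 1) - (xj 1 - xi 1) * (xm 0 - xi 0) ≠ 0)
    (q : MvPolynomial (Fin 2) ℝ)
    (hq : ∀ t : ℝ, 0 ≤ t → t ≤ 1/2 → eval (fun a => xi a + t * (xj a - xi a)) q = 0) :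
    lam ∣ q := by
  set e : ℝ := (xj 0 - xi 0) * (xm 1 - xi 1) - (xj 1 - xi 1) * (xm 0 - xi 0) with hedef
  set g : Fin 2 → MvPolynomial (Fin 2) ℝ :=
    fun a => C (xi a) + C (xj a - xi a) * X 0 + C (xm a - xi a) * X 1 with hgdef
  set g' : Fin 2 → MvPolynomial (Fin 2) ℝ :=
    ![C e⁻¹ * (C (xm 1 - xi 1) * (X 0 - C (xi 0)) - C (xm 0 - xi 0) * (X 1 - C (xi 1))),
      C e⁻¹ * (C (xj 0 - xi 0) * (X 1 - C (xi 1)) - C (xj 1 - xi 1) * (X 0 - C (xi 0)))]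
    with hg'def
  have he'' : ((C (xj 0 - xi 0) * C (xm 1 - xi 1) - C (xj 1 - xi 1) * C (xm 0 - xi 0))
      * C e⁻¹ : MvPolynomial (Fin 2) ℝ) = 1 := by
    rw [← C_mul, ← C_mul, ← C_sub, ← C_mul, ← hedef, mul_inv_cancel₀ he, C_1]
  have hcomp : (aeval g').comp (aeval g) = AlgHom.id ℝ (MvPolynomial (Fin 2) ℝ) := by
    apply MvPolynomial.algHom_ext
    intro b
    fin_cases b <;>
      simp only [AlgHom.coe_comp, Function.comp_apply, AlgHom.coe_id, id_eq, aeval_X,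
        hgdef, map_add, _root_.map_mul, aeval_C, MvPolynomial.algebraMap_eq, hg'def,
        Fin.zero_eta, Fin.mk_one, Fin.isValue, Matrix.cons_val_zero, Matrix.cons_val_one,
        Matrix.head_cons]
    · linear_combination (X 0 - C (xi 0)) * he''
    · linear_combination (X 1 - C (xi 1)) * he''
  have hid : ∀ r : MvPolynomial (Fin 2) ℝ, aeval g' (aeval g r) = r := by
    intro r
    rw [← AlgHom.comp_apply, hcomp, AlgHom.id_apply]
  -- the image of lam under the change of variables is X 1
  have hi' := hi
  have hj' := hj
  have hm' := hm
  rw [rep1 lam hdeg] at hi' hj' hm'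
  simp only [map_add, _root_.map_mul, eval_C, eval_X] at hi' hj' hm'
  have hC0 : (C (coeff 0 lam) + C (coeff (Finsupp.single 0 1) lam) * C (xi 0)
      + C (coeff (Finsupp.single 1 1) lam) * C (xi 1) : MvPolynomial (Fin 2) ℝ) = 0 := by
    rw [← C_mul, ← C_mul, ← C_add, ← C_add]
    rw [show coeff 0 lam + coeff (Finsupp.single 0 1) lam * xi 0
        + coeff (Finsupp.single 1 1) lam * xi 1 = 0 by linear_combination hi', C_0]
  have hCu : (C (coeff (Finsupp.single 0 1) lam) * C (xj 0 - xi 0)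
      + C (coeff (Finsupp.single 1 1) lam) * C (xj 1 - xi 1) : MvPolynomial (Fin 2) ℝ) = 0 := by
    rw [← C_mul, ← C_mul, ← C_add]
    rw [show coeff (Finsupp.single 0 1) lam * (xj 0 - xi 0)
        + coeff (Finsupp.single 1 1) lam * (xj 1 - xi 1) = 0 by linear_combination hj' - hi',
      C_0]
  have hCv : (C (coeff (Finsupp.single 0 1) lam) * C (xm 0 - xi 0)
      + C (coeff (Finsupp.single 1 1) lam) * C (xm 1 - xi 1) : MvPolynomial (Fin 2) ℝ) = 1 := by
    rw [← C_mul, ← C_mul, ← C_add]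
    rw [show coeff (Finsupp.single 0 1) lam * (xm 0 - xi 0)
        + coeff (Finsupp.single 1 1) lam * (xm 1 - xi 1) = 1 by linear_combination hm' - hi',
      C_1]
  have hΨlam : aeval g lam = X 1 := by
    conv_lhs => rw [rep1 lam hdeg]
    simp only [map_add, _root_.map_mul, aeval_C, aeval_X, MvPolynomial.algebraMap_eq, hgdef]
    linear_combination (X 0 : MvPolynomial (Fin 2) ℝ) * hCu + (X 1 : MvPolynomial (Fin 2) ℝ) * hCv + hC0
  -- the image of q vanishes on the X1 = 0 half-line
  have hqv : ∀ t : ℝ, 0 ≤ t → t ≤ 1/2 → eval ![t, 0] (aeval g q) = 0 := by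
    intro t ht0 ht1
    rw [eval_aeval']
    have hfun : (fun a => eval ![t, 0] (g a)) = fun a => xi a + t * (xj a - xi a) := by
      funext a
      simp only [hgdef, map_add, _root_.map_mul, eval_C, eval_X,
        Matrix.cons_val_zero, Matrix.cons_val_one, Matrix.head_cons]
      ring
    rw [hfun]
    exact hq t ht0 ht1
  obtain ⟨h, hh⟩ := X1_dvd hqv
  refine Dvd.intro (aeval g' h) ?_
  calc lam * aeval g' h = aeval g' (aeval g lam) * aeval g' h := by rw [hid lam]
    _ = aeval g' (X 1) * aeval g' h := by rw [hΨlam]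
    _ = aeval g' (X 1 * h) := by rw [_root_.map_mul]
    _ = aeval g' (aeval g q) := by rw [← hh]
    _ = q := hid q


lemma tri3 (i j : Fin 3) (hij : i ≠ j) : ∀ r s : Fin 3, r ≠ s → (r = i ∧ s = j) ∨ (r = j ∧ s = i)
    ∨ (r ≠ i ∧ r ≠ j) ∨ (s ≠ i ∧ s ≠ j) := by
  revert hij; revert i j; decide

set_option maxHeartbeats 2000000 in
/-- On a nondegenerate triangle, the `H(div)` bubble space
`H_{Δ,k,b} = Σ_{i<j} λ_iλ_j P_{k−2} t_{i,j}t_{i,j}ᵀ` coincides with the space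
of symmetric matrix polynomials of degree ≤ k whose normal trace vanishes on
the whole boundary. -/
theorem bubble_space_eq_zero_normal_trace
    (k : ℕ) (hk : 2 ≤ k)
    (x : Fin 3 → (Fin 2 → ℝ))
    (hnd : LinearIndependent ℝ ![x 1 - x 0, x 2 - x 0])
    (lam : Fin 3 → MvPolynomial (Fin 2) ℝ)
    (hdeg : ∀ i, (lam i).totalDegree ≤ 1)
    (hlam : ∀ i j, eval (x j) (lam i) = if i = j then (1 : ℝ) else 0)
    (T : Fin 3 → Fin 3 → Matrix (Fin 2) (Fin 2) (MvPolynomial (Fin 2) ℝ))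
    (hT : ∀ i j, T i j = (vecMulVec (x j - x i) (x j - x i)).map C) :
    {τ : Matrix (Fin 2) (Fin 2) (MvPolynomial (Fin 2) ℝ) |
        ∃ p : Fin 3 → Fin 3 → MvPolynomial (Fin 2) ℝ,
          (∀ i j, (p i j).totalDegree ≤ k - 2) ∧
          τ = (lam 0 * lam 1 * p 0 1) • T 0 1
              + (lam 0 * lam 2 * p 0 2) • T 0 2
              + (lam 1 * lam 2 * p 1 2) • T 1 2}
      =
    {τ : Matrix (Fin 2) (Fin 2) (MvPolynomial (Fin 2) ℝ) |
        (∀ a b, τ a b = τ b a) ∧ (∀ a b, (τ a b).totalDegree ≤ k) ∧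
        ∀ i j : Fin 3, i ≠ j →
          ∀ ν : Fin 2 → ℝ, ν ⬝ᵥ (x j - x i) = 0 →
            ∀ y ∈ segment ℝ (x i) (x j),
              (τ.map (eval y)) *ᵥ ν = 0} := by
  ext τ
  simp only [Set.mem_setOf_eq]
  constructor
  · rintro ⟨p, hp, rfl⟩
    refine ⟨?_, ?_, ?_⟩
    · intro a b
      simp only [Matrix.add_apply, Matrix.smul_apply, hT, Matrix.map_apply,
        vecMulVec_apply, smul_eq_mul]
      ring
    · intro a b
      simp only [Matrix.add_apply, Matrix.smul_apply, hT, Matrix.map_apply,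
        vecMulVec_apply, smul_eq_mul]
      have key : ∀ (i j : Fin 3) (r : ℝ), ((lam i * lam j * p i j) * C r).totalDegree ≤ k := by
        intro i j r
        calc ((lam i * lam j * p i j) * C r).totalDegree
            ≤ (lam i * lam j * p i j).totalDegree + (C r).totalDegree := totalDegree_mul _ _
          _ ≤ (lam i * lam j).totalDegree + (p i j).totalDegree + 0 := by
              rw [totalDegree_C]
              exact Nat.add_le_add_right (totalDegree_mul _ _) 0
          _ ≤ ((lam i).totalDegree + (lam j).totalDegree) + (p i j).totalDegree + 0 := by
              exact Nat.add_le_add_right (Nat.add_le_add_right (totalDegree_mul _ _) _) 0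
          _ ≤ (1 + 1) + (k - 2) + 0 := by
              have := hdeg i; have := hdeg j; have := hp i j
              omega
          _ ≤ k := by omega
      refine le_trans (totalDegree_add _ _) (max_le (le_trans (totalDegree_add _ _)
        (max_le ?_ ?_)) ?_) <;> apply key
    · intro i j hij ν hν y hy
      obtain ⟨a, b, ha, hb, hab, hy'⟩ := hy
      have hlamy : ∀ m : Fin 3, m ≠ i → m ≠ j → eval y (lam m) = 0 := by
        intro m hmi hmj
        rw [← hy', eval_comb (hdeg m) a b hab, hlam m i, hlam m j,
          if_neg hmi, if_neg hmj]
        ring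
      have tri := tri3 i j hij
      have coefzero : ∀ r s : Fin 3, r ≠ s →
          eval y (lam r * lam s * p r s) * ((x s - x r) ⬝ᵥ ν) = 0 := by
        intro r s hrs
        rcases tri r s hrs with (⟨h1, h2⟩ | ⟨h1, h2⟩ | ⟨hr1, hr2⟩ | ⟨hs1, hs2⟩)
        · rw [h1, h2, dotProduct_comm, hν, mul_zero]
        · rw [h1, h2, show x i - x j = -(x j - x i) from (neg_sub _ _).symm, neg_dotProduct,
            dotProduct_comm, hν, neg_zero, mul_zero]
        · rw [_root_.map_mul, _root_.map_mul, hlamy r hr1 hr2]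
          ring
        · rw [_root_.map_mul, _root_.map_mul, hlamy s hs1 hs2]
          ring
      funext c
      simp only [Matrix.mulVec, dotProduct, Matrix.map_apply, Matrix.add_apply,
        Matrix.smul_apply, smul_eq_mul, hT, vecMulVec_apply, _root_.map_mul, map_add,
        eval_C, Fin.sum_univ_two, Pi.zero_apply, Pi.sub_apply]
      have h1 := coefzero 0 1 (by decide)
      have h2 := coefzero 0 2 (by decide)
      have h3 := coefzero 1 2 (by decide)
      simp only [dotProduct, Fin.sum_univ_two, Pi.sub_apply, _root_.map_mul] at h1 h2 h3
      linear_combination (x 1 c - x 0 c) * h1 + (x 2 c - x 0 c) * h2 + (x 2 c - x 1 c) * h3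
  · rintro ⟨hsym, hdegτ, hvan⟩
    -- the determinant of the triangle
    have hd : (x 1 0 - x 0 0) * (x 2 1 - x 0 1) - (x 1 1 - x 0 1) * (x 2 0 - x 0 0) ≠ 0 := by
      intro hd0
      rw [linearIndependent_fin2] at hnd
      obtain ⟨h2ne, hnot⟩ := hnd
      simp only [Matrix.cons_val_one, Matrix.head_cons, Matrix.cons_val_zero] at h2ne hnot
      by_cases hv0 : x 2 0 - x 0 0 = 0
      · by_cases hv1 : x 2 1 - x 0 1 = 0
        · apply h2ne
          funext a
          fin_cases a <;>
            simp only [Fin.zero_eta, Fin.mk_one, Fin.isValue, Pi.sub_apply, Pi.zero_apply] <;>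
            linarith
        · apply hnot ((x 1 1 - x 0 1) / (x 2 1 - x 0 1))
          funext a
          fin_cases a <;>
            simp only [Fin.zero_eta, Fin.mk_one, Fin.isValue, Pi.smul_apply, Pi.sub_apply,
              smul_eq_mul]
          · rw [hv0, mul_zero]
            have hz : (x 1 0 - x 0 0) * (x 2 1 - x 0 1) = 0 := by
              linear_combination hd0 + (x 1 1 - x 0 1) * hv0
            rcases mul_eq_zero.mp hz with h | h
            · linarith
            · exact absurd h hv1
          · field_simp
      · apply hnot ((x 1 0 - x 0 0) / (x 2 0 - x 0 0))
        funext a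
        fin_cases a <;>
          simp only [Fin.zero_eta, Fin.mk_one, Fin.isValue, Pi.smul_apply, Pi.sub_apply,
            smul_eq_mul]
        · field_simp
        · field_simp
          linear_combination hd0
    -- the three scaled normals
    set n3 : Fin 2 → ℝ := ![-(x 1 1 - x 0 1), x 1 0 - x 0 0] with hn3def
    set n2 : Fin 2 → ℝ := ![-(x 2 1 - x 0 1), x 2 0 - x 0 0] with hn2def
    set n1 : Fin 2 → ℝ := ![-(x 2 1 - x 1 1), x 2 0 - x 1 0] with hn1def
    have hperp3 : n3 ⬝ᵥ (x 1 - x 0) = 0 := by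
      simp [hn3def, dotProduct, Fin.sum_univ_two, Pi.sub_apply]; ring
    have hperp2 : n2 ⬝ᵥ (x 2 - x 0) = 0 := by
      simp [hn2def, dotProduct, Fin.sum_univ_two, Pi.sub_apply]; ring
    have hperp1 : n1 ⬝ᵥ (x 2 - x 1) = 0 := by
      simp [hn1def, dotProduct, Fin.sum_univ_two, Pi.sub_apply]; ring
    have hperp1' : n1 ⬝ᵥ (x 1 - x 2) = 0 := by
      simp [hn1def, dotProduct, Fin.sum_univ_two, Pi.sub_apply]; ring
    have hperp2' : n2 ⬝ᵥ (x 0 - x 2) = 0 := by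
      simp [hn2def, dotProduct, Fin.sum_univ_two, Pi.sub_apply]; ring
    -- the bilinear contraction of τ
    set S : (Fin 2 → ℝ) → (Fin 2 → ℝ) → MvPolynomial (Fin 2) ℝ :=
      fun m n => C (m 0 * n 0) * τ 0 0 + C (m 0 * n 1) * τ 0 1
        + C (m 1 * n 0) * τ 1 0 + C (m 1 * n 1) * τ 1 1 with hSdef
    set iv : ℝ := ((x 1 0 - x 0 0) * (x 2 1 - x 0 1) - (x 1 1 - x 0 1) * (x 2 0 - x 0 0))⁻¹
      with hivdef
    set q01 : MvPolynomial (Fin 2) ℝ := C (iv * iv) * S n2 n1 with hq01def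
    set q02 : MvPolynomial (Fin 2) ℝ := C (-(iv * iv)) * S n3 n1 with hq02def
    set q12 : MvPolynomial (Fin 2) ℝ := C (iv * iv) * S n3 n2 with hq12def
    -- parametrized points lie on segments
    have hmem : ∀ (i j : Fin 3) (t : ℝ), 0 ≤ t → t ≤ 1/2 →
        (fun a => x i a + t * (x j a - x i a)) ∈ segment ℝ (x i) (x j) := by
      intro i j t ht0 ht1
      refine ⟨1 - t, t, by linarith, by linarith, by ring, ?_⟩
      funext a
      simp only [Pi.add_apply, Pi.smul_apply, smul_eq_mul]
      ring
    -- vanishing of the contraction along edges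
    have hSvan : ∀ (i j : Fin 3), i ≠ j → ∀ ν : Fin 2 → ℝ, ν ⬝ᵥ (x j - x i) = 0 →
        ∀ y ∈ segment ℝ (x i) (x j), ∀ m : Fin 2 → ℝ,
          eval y (S m ν) = 0 ∧ eval y (S ν m) = 0 := by
      intro i j hij ν hν y hy m
      have h := hvan i j hij ν hν y hy
      have h0 := congrFun h 0
      have h1 := congrFun h 1
      simp only [Matrix.mulVec, dotProduct, Matrix.map_apply, Fin.sum_univ_two,
        Pi.zero_apply] at h0 h1
      have hsy : eval y (τ 1 0) = eval y (τ 0 1) := by rw [hsym 1 0]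
      constructor
      · simp only [hSdef, map_add, _root_.map_mul, eval_C]
        linear_combination m 0 * h0 + m 1 * h1
      · simp only [hSdef, map_add, _root_.map_mul, eval_C]
        linear_combination m 0 * h0 + m 1 * h1 + (m 0 * ν 1 - m 1 * ν 0) * hsy
    -- evaluation of barycentric coordinates along edges
    have hlamline : ∀ (m i j : Fin 3) (t : ℝ),
        eval (fun a => x i a + t * (x j a - x i a)) (lam m)
          = (1 - t) * (if m = i then 1 else 0) + t * (if m = j then 1 else 0) := by
      intro m i j t
      have hpt : (fun a => x i a + t * (x j a - x i a)) = (1 - t) • x i + t • x j := by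
        funext a
        simp only [Pi.add_apply, Pi.smul_apply, smul_eq_mul]
        ring
      rw [hpt, eval_comb (hdeg m) (1 - t) t (by ring), hlam, hlam]
    -- total degrees of the contractions
    have keyC : ∀ (r : ℝ) (q : MvPolynomial (Fin 2) ℝ), q.totalDegree ≤ k →
        (C r * q).totalDegree ≤ k := by
      intro r q hq
      calc (C r * q).totalDegree ≤ (C r).totalDegree + q.totalDegree := totalDegree_mul _ _
        _ ≤ k := by rw [totalDegree_C]; simpa using hq
    have hdegS : ∀ m n : Fin 2 → ℝ, (S m n).totalDegree ≤ k := by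
      intro m n
      simp only [hSdef]
      refine le_trans (totalDegree_add _ _) (max_le (le_trans (totalDegree_add _ _)
        (max_le (le_trans (totalDegree_add _ _) (max_le ?_ ?_)) ?_)) ?_) <;>
        exact keyC _ _ (hdegτ _ _)
    have hdegq01 : q01.totalDegree ≤ k := keyC _ _ (hdegS _ _)
    have hdegq02 : q02.totalDegree ≤ k := keyC _ _ (hdegS _ _)
    have hdegq12 : q12.totalDegree ≤ k := keyC _ _ (hdegS _ _)
    -- the barycentric coordinates have degree exactly one
    have hlamdeg1 : ∀ m : Fin 3, (lam m).totalDegree = 1 := by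
      intro m
      refine le_antisymm (hdeg m) ?_
      by_contra hlt
      push_neg at hlt
      have h0 : (lam m).totalDegree = 0 := by omega
      have hconst : ∀ z : Fin 2 → ℝ, eval z (lam m) = coeff 0 (lam m) := by
        intro z
        have hc1 : coeff (Finsupp.single 0 1) (lam m) = 0 := by
          by_contra hc
          have hle := le_totalDegree (p := lam m) (mem_support_iff.mpr hc)
          rw [h0] at hle
          simp at hle
        have hc2 : coeff (Finsupp.single 1 1) (lam m) = 0 := by
          by_contra hc
          have hle := le_totalDegree (p := lam m) (mem_support_iff.mpr hc)
          rw [h0] at hle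
          simp at hle
        conv_lhs => rw [rep1 (lam m) (hdeg m)]
        simp [hc1, hc2]
      obtain ⟨j, hj⟩ : ∃ j : Fin 3, m ≠ j := by
        fin_cases m
        exacts [⟨1, by decide⟩, ⟨0, by decide⟩, ⟨0, by decide⟩]
      have e1 := hlam m m
      rw [if_pos rfl, hconst] at e1
      have e2 := hlam m j
      rw [if_neg hj, hconst] at e2
      rw [e2] at e1
      exact zero_ne_one e1
    have lam_ne : ∀ m : Fin 3, lam m ≠ 0 := by
      intro m h
      have := hlamdeg1 m
      rw [h, totalDegree_zero] at this
      omega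
    have degstep : ∀ (a b : Fin 3) (q pp : MvPolynomial (Fin 2) ℝ), q.totalDegree ≤ k →
        q = lam a * lam b * pp → pp.totalDegree ≤ k - 2 := by
      intro a b q pp hqk heq
      by_cases hp0 : pp = 0
      · simp [hp0]
      have h1 : q.totalDegree = (lam a).totalDegree + (lam b * pp).totalDegree := by
        rw [heq, mul_assoc, tdeg_mul (lam_ne a) (mul_ne_zero (lam_ne b) hp0)]
      rw [tdeg_mul (lam_ne b) hp0, hlamdeg1 a, hlamdeg1 b] at h1
      omega
    -- === divisibility of q01 ===
    have hq01v : ∀ t : ℝ, 0 ≤ t → t ≤ 1/2 →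
        eval (fun a => x 0 a + t * (x 2 a - x 0 a)) q01 = 0 := by
      intro t ht0 ht1
      have hz := (hSvan 0 2 (by decide) n2 hperp2 _ (hmem 0 2 t ht0 ht1) n1).2
      rw [hq01def, _root_.map_mul, eval_C, hz, mul_zero]
    obtain ⟨h1, hh1⟩ := div_lemma (x 0) (x 2) (x 1) (lam 1) (hdeg 1)
      (by simp [hlam]) (by simp [hlam]) (by simp [hlam])
      (by intro hcon; apply hd; linear_combination -hcon) q01 hq01v
    have hh1v : ∀ t : ℝ, 0 ≤ t → t ≤ 1/2 →
        eval (fun a => x 1 a + t * (x 2 a - x 1 a)) h1 = 0 := by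
      intro t ht0 ht1
      have hq0 : eval (fun a => x 1 a + t * (x 2 a - x 1 a)) q01 = 0 := by
        have hz := (hSvan 1 2 (by decide) n1 hperp1 _ (hmem 1 2 t ht0 ht1) n2).1
        rw [hq01def, _root_.map_mul, eval_C, hz, mul_zero]
      rw [hh1, _root_.map_mul] at hq0
      have hl1 : eval (fun a => x 1 a + t * (x 2 a - x 1 a)) (lam 1) = 1 - t := by
        rw [hlamline, if_pos rfl, if_neg (by decide)]
        ring
      rw [hl1] at hq0
      exact (mul_eq_zero.mp hq0).resolve_left (by intro h; linarith)
    obtain ⟨p01, hp01⟩ := div_lemma (x 1) (x 2) (x 0) (lam 0) (hdeg 0)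
      (by simp [hlam]) (by simp [hlam]) (by simp [hlam])
      (by intro hcon; apply hd; linear_combination hcon) h1 hh1v
    have hq01eq : q01 = lam 0 * lam 1 * p01 := by rw [hh1, hp01]; ring
    -- === divisibility of q02 ===
    have hq02v : ∀ t : ℝ, 0 ≤ t → t ≤ 1/2 →
        eval (fun a => x 0 a + t * (x 1 a - x 0 a)) q02 = 0 := by
      intro t ht0 ht1
      have hz := (hSvan 0 1 (by decide) n3 hperp3 _ (hmem 0 1 t ht0 ht1) n1).2
      rw [hq02def, _root_.map_mul, eval_C, hz, mul_zero]
    obtain ⟨h2, hh2⟩ := div_lemma (x 0) (x 1) (x 2) (lam 2) (hdeg 2)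
      (by simp [hlam]) (by simp [hlam]) (by simp [hlam])
      (by intro hcon; apply hd; linear_combination hcon) q02 hq02v
    have hh2v : ∀ t : ℝ, 0 ≤ t → t ≤ 1/2 →
        eval (fun a => x 2 a + t * (x 1 a - x 2 a)) h2 = 0 := by
      intro t ht0 ht1
      have hq0 : eval (fun a => x 2 a + t * (x 1 a - x 2 a)) q02 = 0 := by
        have hz := (hSvan 2 1 (by decide) n1 hperp1' _ (hmem 2 1 t ht0 ht1) n3).1
        rw [hq02def, _root_.map_mul, eval_C, hz, mul_zero]
      rw [hh2, _root_.map_mul] at hq0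
      have hl1 : eval (fun a => x 2 a + t * (x 1 a - x 2 a)) (lam 2) = 1 - t := by
        rw [hlamline, if_pos rfl, if_neg (by decide)]
        ring
      rw [hl1] at hq0
      exact (mul_eq_zero.mp hq0).resolve_left (by intro h; linarith)
    obtain ⟨p02, hp02⟩ := div_lemma (x 2) (x 1) (x 0) (lam 0) (hdeg 0)
      (by simp [hlam]) (by simp [hlam]) (by simp [hlam])
      (by intro hcon; apply hd; linear_combination -hcon) h2 hh2v
    have hq02eq : q02 = lam 0 * lam 2 * p02 := by rw [hh2, hp02]; ring
    -- === divisibility of q12 ===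
    have hq12v : ∀ t : ℝ, 0 ≤ t → t ≤ 1/2 →
        eval (fun a => x 0 a + t * (x 1 a - x 0 a)) q12 = 0 := by
      intro t ht0 ht1
      have hz := (hSvan 0 1 (by decide) n3 hperp3 _ (hmem 0 1 t ht0 ht1) n2).2
      rw [hq12def, _root_.map_mul, eval_C, hz, mul_zero]
    obtain ⟨h3, hh3⟩ := div_lemma (x 0) (x 1) (x 2) (lam 2) (hdeg 2)
      (by simp [hlam]) (by simp [hlam]) (by simp [hlam])
      (by intro hcon; apply hd; linear_combination hcon) q12 hq12v
    have hh3v : ∀ t : ℝ, 0 ≤ t → t ≤ 1/2 →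
        eval (fun a => x 2 a + t * (x 0 a - x 2 a)) h3 = 0 := by
      intro t ht0 ht1
      have hq0 : eval (fun a => x 2 a + t * (x 0 a - x 2 a)) q12 = 0 := by
        have hz := (hSvan 2 0 (by decide) n2 hperp2' _ (hmem 2 0 t ht0 ht1) n3).1
        rw [hq12def, _root_.map_mul, eval_C, hz, mul_zero]
      rw [hh3, _root_.map_mul] at hq0
      have hl1 : eval (fun a => x 2 a + t * (x 0 a - x 2 a)) (lam 2) = 1 - t := by
        rw [hlamline, if_pos rfl, if_neg (by decide)]
        ring
      rw [hl1] at hq0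
      exact (mul_eq_zero.mp hq0).resolve_left (by intro h; linarith)
    obtain ⟨p12, hp12⟩ := div_lemma (x 2) (x 0) (x 1) (lam 1) (hdeg 1)
      (by simp [hlam]) (by simp [hlam]) (by simp [hlam])
      (by intro hcon; apply hd; linear_combination hcon) h3 hh3v
    have hq12eq : q12 = lam 1 * lam 2 * p12 := by rw [hh3, hp12]; ring
    -- degrees of the quotients
    have hdp01 : p01.totalDegree ≤ k - 2 := degstep 0 1 q01 p01 hdegq01 hq01eq
    have hdp02 : p02.totalDegree ≤ k - 2 := degstep 0 2 q02 p02 hdegq02 hq02eq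
    have hdp12 : p12.totalDegree ≤ k - 2 := degstep 1 2 q12 p12 hdegq12 hq12eq
    -- the decomposition of τ
    have hdecomp : τ = q01 • T 0 1 + q02 • T 0 2 + q12 • T 1 2 := by
      clear hvan hmem hSvan hlamline keyC hdegS hlamdeg1 lam_ne degstep hq01v hh1v hq02v hh2v
        hq12v hh3v hperp1 hperp2 hperp3 hperp1' hperp2' hdegq01 hdegq02 hdegq12
        hh1 hh2 hh3 hp01 hp02 hp12 hq01eq hq02eq hq12eq hdp01 hdp02 hdp12
      have hsy := hsym 1 0
      refine Matrix.ext fun a b => ?_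
      fin_cases a <;> fin_cases b <;>
        simp only [Fin.zero_eta, Fin.mk_one, Fin.isValue, Matrix.add_apply, Matrix.smul_apply,
          smul_eq_mul, hT, Matrix.map_apply, vecMulVec_apply, Pi.sub_apply, hq01def, hq02def,
          hq12def, hSdef, hn3def, hn2def, hn1def, hivdef, Matrix.cons_val_zero,
          Matrix.cons_val_one, Matrix.head_cons] <;>
        rw [hsy] <;>
      · apply MvPolynomial.funext
        intro z
        simp only [map_add, _root_.map_mul, eval_C]
        field_simp
        ring
    refine ⟨![![0, p01, p02], ![0, 0, p12], ![0, 0, 0]], ?_, ?_⟩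
    · intro i j
      fin_cases i <;> fin_cases j <;>
        simp only [Matrix.cons_val_zero, Matrix.cons_val_one, Matrix.head_cons,
          Matrix.cons_val_two, Matrix.tail_cons, totalDegree_zero] <;>
        first
          | exact Nat.zero_le _
          | exact hdp01
          | exact hdp02
          | exact hdp12
    · rw [hdecomp]
      have hp01' : (![![0, p01, p02], ![0, 0, p12], ![0, 0, 0]] : Fin 3 → Fin 3 → MvPolynomial (Fin 2) ℝ) 0 1 = p01 := by simp
      have hp02' : (![![0, p01, p02], ![0, 0, p12], ![0, 0, 0]] : Fin 3 → Fin 3 → MvPolynomial (Fin 2) ℝ) 0 2 = p02 := by simp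
      have hp12' : (![![0, p01, p02], ![0, 0, p12], ![0, 0, 0]] : Fin 3 → Fin 3 → MvPolynomial (Fin 2) ℝ) 1 2 = p12 := by simp
      rw [hp01', hp02', hp12', hq01eq, hq02eq, hq12eq]
end

section
/- Let K ⊂ ℝ³ be a nondegenerate tetrahedron with faces F_i opposite vertices x_i. Suppose τ = Σ_{1≤i<j≤4} p_{ij} t_{i,j} t_{i,j}^T with functions p_{ij}, and let ν be the outward unit normal of face F_i. If ∫_{F_i} τν · v ds = 0 for all v ∈ P_k(F_i;ℝ³), then for each s ≠ i, ∫_{F_i} p_{is} w ds = 0 for all w ∈ P_k(F_i;ℝ). -/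
open Matrix MvPolynomial MeasureTheory

private lemma fin4_mk0 : (⟨0, by omega⟩ : Fin 4) = 0 := rfl
private lemma fin4_mk1 : (⟨1, by omega⟩ : Fin 4) = 1 := rfl
private lemma fin4_mk2 : (⟨2, by omega⟩ : Fin 4) = 2 := rfl
private lemma fin4_mk3 : (⟨3, by omega⟩ : Fin 4) = 3 := rfl

private lemma hvv_aux (u ν n : Fin 3 → ℝ) :
    (vecMulVec u u *ᵥ ν) ⬝ᵥ n = (u ⬝ᵥ ν) * (u ⬝ᵥ n) := by
  simp [vecMulVec, mulVec, dotProduct, Finset.sum_mul, Finset.mul_sum, Fin.sum_univ_three]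
  ring

set_option maxHeartbeats 2000000 in
private lemma aux_li (x : Fin 4 → (Fin 3 → ℝ))
    (hnd : LinearIndependent ℝ ![x 1 - x 0, x 2 - x 0, x 3 - x 0])
    (i a b c : Fin 4)
    (hia : i ≠ a) (hib : i ≠ b) (hic : i ≠ c)
    (hab : a ≠ b) (hac : a ≠ c) (hbc : b ≠ c) :
    IsUnit (Matrix.of ![x a - x i, x b - x i, x c - x i]) := by
  have hdet : (Matrix.of ![x 1 - x 0, x 2 - x 0, x 3 - x 0]).det ≠ 0 := by
    have h : IsUnit (Matrix.of ![x 1 - x 0, x 2 - x 0, x 3 - x 0]) :=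
      Matrix.linearIndependent_rows_iff_isUnit.mp hnd
    simpa [isUnit_iff_ne_zero] using (Matrix.isUnit_iff_isUnit_det _).mp h
  rw [Matrix.isUnit_iff_isUnit_det, isUnit_iff_ne_zero]
  intro h
  apply hdet
  fin_cases i <;> fin_cases a <;> fin_cases b <;> fin_cases c <;>
    first
      | exact absurd rfl hia
      | exact absurd rfl hib
      | exact absurd rfl hic
      | exact absurd rfl hab
      | exact absurd rfl hac
      | exact absurd rfl hbc
      | (simp only [fin4_mk0, fin4_mk1, fin4_mk2, fin4_mk3, Matrix.det_fin_three,
          Matrix.of_apply, Matrix.cons_val', Matrix.cons_val_zero, Matrix.cons_val_one,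
          Matrix.cons_val_two, Matrix.tail_cons, Matrix.head_cons, Matrix.empty_val',
          Matrix.cons_val_fin_one, Matrix.head_fin_const, Pi.sub_apply] at h ⊢
         first | linear_combination h | linear_combination -h)

set_option maxHeartbeats 1000000 in
private theorem face_moments_aux
    (k : ℕ)
    (x : Fin 4 → (Fin 3 → ℝ))
    (hnd : LinearIndependent ℝ ![x 1 - x 0, x 2 - x 0, x 3 - x 0])
    (p : Fin 4 → Fin 4 → ((Fin 3 → ℝ) → ℝ))
    (hpsymm : ∀ i j, p i j = p j i)
    (τ : (Fin 3 → ℝ) → Matrix (Fin 3) (Fin 3) ℝ)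
    (hτ : τ = fun y =>
      p 0 1 y • vecMulVec (x 1 - x 0) (x 1 - x 0)
      + p 0 2 y • vecMulVec (x 2 - x 0) (x 2 - x 0)
      + p 0 3 y • vecMulVec (x 3 - x 0) (x 3 - x 0)
      + p 1 2 y • vecMulVec (x 2 - x 1) (x 2 - x 1)
      + p 1 3 y • vecMulVec (x 3 - x 1) (x 3 - x 1)
      + p 2 3 y • vecMulVec (x 3 - x 2) (x 3 - x 2))
    (i a b c : Fin 4)
    (hia : i ≠ a) (hib : i ≠ b) (hic : i ≠ c)
    (hab : a ≠ b) (hac : a ≠ c) (hbc : b ≠ c)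
    (φ : (Fin 2 → ℝ) → (Fin 3 → ℝ))
    (T : Set (Fin 2 → ℝ))
    (ν : Fin 3 → ℝ) (hν : ν ≠ 0)
    (hν1 : ν ⬝ᵥ (x b - x a) = 0) (hν2 : ν ⬝ᵥ (x c - x a) = 0)
    (hmom : ∀ v : Fin 3 → MvPolynomial (Fin 3) ℝ,
      (∀ r, (v r).totalDegree ≤ k) →
      ∫ w in T, ((τ (φ w)) *ᵥ ν) ⬝ᵥ (fun r => eval (φ w) (v r)) = 0) :
    ∀ q : MvPolynomial (Fin 3) ℝ, q.totalDegree ≤ k →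
      ∫ w in T, p i a (φ w) * eval (φ w) q = 0 := by
  -- the matrix of edge vectors from `x i`
  set A : Matrix (Fin 3) (Fin 3) ℝ := Matrix.of ![x a - x i, x b - x i, x c - x i] with hAdef
  have hA : IsUnit A := aux_li x hnd i a b c hia hib hic hab hac hbc
  have hAdet : IsUnit A.det := (Matrix.isUnit_iff_isUnit_det _).mp hA
  -- dual vector
  set nv : Fin 3 → ℝ := A⁻¹ *ᵥ Pi.single 0 1 with hnvdef
  have hAnv : A *ᵥ nv = Pi.single 0 1 := by
    rw [hnvdef, Matrix.mulVec_mulVec, Matrix.mul_nonsing_inv _ hAdet, Matrix.one_mulVec]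
  have hna : (x a - x i) ⬝ᵥ nv = 1 := by
    have h0 := congrFun hAnv 0
    simp [hAdef, Matrix.mulVec, dotProduct, Fin.sum_univ_three, Pi.single_apply] at h0 ⊢
    linarith
  have hnb : (x b - x i) ⬝ᵥ nv = 0 := by
    have h0 := congrFun hAnv 1
    simp [hAdef, Matrix.mulVec, dotProduct, Fin.sum_univ_three, Pi.single_apply] at h0 ⊢
    linarith
  have hnc : (x c - x i) ⬝ᵥ nv = 0 := by
    have h0 := congrFun hAnv 2
    simp [hAdef, Matrix.mulVec, dotProduct, Fin.sum_univ_three, Pi.single_apply] at h0 ⊢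
    linarith
  -- the normal component
  set α : ℝ := (x a - x i) ⬝ᵥ ν with hαdef
  have hb : (x b - x i) ⬝ᵥ ν = α := by
    have e1 : ν ⬝ᵥ (x b - x a) = (x b - x i) ⬝ᵥ ν - (x a - x i) ⬝ᵥ ν := by
      simp only [dotProduct_sub, sub_dotProduct, dotProduct_comm ν]
      ring
    rw [e1] at hν1
    rw [hαdef]; linarith
  have hc : (x c - x i) ⬝ᵥ ν = α := by
    have e1 : ν ⬝ᵥ (x c - x a) = (x c - x i) ⬝ᵥ ν - (x a - x i) ⬝ᵥ ν := by
      simp only [dotProduct_sub, sub_dotProduct, dotProduct_comm ν]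
      ring
    rw [e1] at hν2
    rw [hαdef]; linarith
  have hα : α ≠ 0 := by
    intro h0
    have hAν : A *ᵥ ν = 0 := by
      have h0a : (x a - x i) ⬝ᵥ ν = 0 := by rw [← hαdef]; exact h0
      have h0b : (x b - x i) ⬝ᵥ ν = 0 := hb.trans h0
      have h0c : (x c - x i) ⬝ᵥ ν = 0 := hc.trans h0
      simp [dotProduct, Fin.sum_univ_three] at h0a h0b h0c
      funext r
      fin_cases r
      · simp [hAdef, Matrix.mulVec, dotProduct, Fin.sum_univ_three]; linarith
      · simp [hAdef, Matrix.mulVec, dotProduct, Fin.sum_univ_three]; linarith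
      · simp [hAdef, Matrix.mulVec, dotProduct, Fin.sum_univ_three]; linarith
    have hinj : Function.Injective A.mulVec := Matrix.mulVec_injective_iff_isUnit.mpr hA
    have : ν = 0 := hinj (by simpa using hAν)
    exact hν this
  -- membership of all indices
  have huniv : ∀ m : Fin 4, m = i ∨ m = a ∨ m = b ∨ m = c := by
    intro m
    by_contra hcon
    push_neg at hcon
    obtain ⟨h1, h2, h3, h4⟩ := hcon
    have hcard : ({m, i, a, b, c} : Finset (Fin 4)).card ≤ 4 :=
      le_trans (Finset.card_le_univ _) (by simp)
    rw [Finset.card_insert_of_notMem (by simp [h1, h2, h3, h4]),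
        Finset.card_insert_of_notMem (by simp [hia, hib, hic]),
        Finset.card_insert_of_notMem (by simp [hab, hac]),
        Finset.card_insert_of_notMem (by simp [hbc]), Finset.card_singleton] at hcard
    omega
  have hβ : ∀ m : Fin 4, m ≠ i → x m ⬝ᵥ ν = x i ⬝ᵥ ν + α := by
    intro m hm
    rcases huniv m with h | h | h | h
    · exact absurd h hm
    · subst h
      have : (x m - x i) ⬝ᵥ ν = α := hαdef.symm
      rw [sub_dotProduct] at this; linarith
    · subst h
      rw [sub_dotProduct] at hb; linarith
    · subst h
      rw [sub_dotProduct] at hc; linarith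
  have hγ : ∀ m : Fin 4, m ≠ i → x m ⬝ᵥ nv = x i ⬝ᵥ nv + (if m = a then 1 else 0) := by
    intro m hm
    rcases huniv m with h | h | h | h
    · exact absurd h hm
    · subst h
      rw [if_pos rfl]
      rw [sub_dotProduct] at hna; linarith
    · subst h
      rw [if_neg (fun h => hab h.symm)]
      rw [sub_dotProduct] at hnb; linarith
    · subst h
      rw [if_neg (fun h => hac h.symm)]
      rw [sub_dotProduct] at hnc; linarith
  -- the key pointwise identity
  have hkey : ∀ y, (τ y *ᵥ ν) ⬝ᵥ nv = α * p i a y := by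
    intro y
    have hβ' : ∀ m : Fin 4, x m ⬝ᵥ ν = (x i ⬝ᵥ ν) + (if m = i then 0 else α) := by
      intro m
      by_cases h : m = i
      · simp [h]
      · simp [h, hβ m h]
    have hγ' : ∀ m : Fin 4, x m ⬝ᵥ nv =
        (x i ⬝ᵥ nv) + (if m = i then 0 else if m = a then 1 else 0) := by
      intro m
      by_cases h : m = i
      · simp [h]
      · simp [h, hγ m h]
    obtain ⟨B, hB⟩ : ∃ B, ∀ m : Fin 4, x m ⬝ᵥ ν = B + (if m = i then 0 else α) := ⟨_, hβ'⟩
    obtain ⟨G, hG⟩ : ∃ G, ∀ m : Fin 4, x m ⬝ᵥ nv =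
        G + (if m = i then 0 else if m = a then 1 else 0) := ⟨_, hγ'⟩
    subst hτ
    simp only [add_mulVec, smul_mulVec, add_dotProduct, smul_dotProduct, smul_eq_mul,
      hvv_aux, sub_dotProduct, hB, hG]
    fin_cases i <;> fin_cases a <;>
      first
        | exact absurd rfl hia
        | (simp only [fin4_mk0, fin4_mk1, fin4_mk2, fin4_mk3,
            hpsymm 1 0, hpsymm 2 0, hpsymm 2 1, hpsymm 3 0, hpsymm 3 1, hpsymm 3 2,
            Fin.reduceEq, reduceIte]
           norm_num
           ring)
  -- conclude
  intro q hq
  have hdeg : ∀ r, ((C (nv r) : MvPolynomial (Fin 3) ℝ) * q).totalDegree ≤ k := by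
    intro r
    refine le_trans (totalDegree_mul _ _) ?_
    simpa [totalDegree_C] using hq
  have h0 := hmom (fun r => C (nv r) * q) hdeg
  have h1 : ∫ w in T, α * (p i a (φ w) * eval (φ w) q) = 0 := by
    rw [← h0]
    congr 1
    funext w
    have hv : (fun r => eval (φ w) ((fun r => (C (nv r) : MvPolynomial (Fin 3) ℝ) * q) r))
        = (eval (φ w) q) • nv := by
      funext r
      simp [mul_comm]
    rw [hv, dotProduct_smul, hkey (φ w)]
    simp [smul_eq_mul]
    ring
  rw [integral_const_mul] at h1
  exact (mul_eq_zero.mp h1).resolve_left hα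

/-- If `τ = Σ_{i<j} p_{ij} t_{i,j}t_{i,j}ᵀ` on a nondegenerate tetrahedron and
all moments of `τν` against `P_k(F_i;ℝ³)` vanish on the face `F_i`, then each
`p_{is}` (`s ≠ i`) has vanishing moments against `P_k(F_i;ℝ)` on `F_i`. -/
theorem face_moments_vanish_componentwise
    (k : ℕ)
    (x : Fin 4 → (Fin 3 → ℝ))
    (hnd : LinearIndependent ℝ ![x 1 - x 0, x 2 - x 0, x 3 - x 0])
    (p : Fin 4 → Fin 4 → ((Fin 3 → ℝ) → ℝ))
    (hpsymm : ∀ i j, p i j = p j i)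
    (hpc : ∀ i j, Continuous (p i j))
    (τ : (Fin 3 → ℝ) → Matrix (Fin 3) (Fin 3) ℝ)
    (hτ : τ = fun y =>
      p 0 1 y • vecMulVec (x 1 - x 0) (x 1 - x 0)
      + p 0 2 y • vecMulVec (x 2 - x 0) (x 2 - x 0)
      + p 0 3 y • vecMulVec (x 3 - x 0) (x 3 - x 0)
      + p 1 2 y • vecMulVec (x 2 - x 1) (x 2 - x 1)
      + p 1 3 y • vecMulVec (x 3 - x 1) (x 3 - x 1)
      + p 2 3 y • vecMulVec (x 3 - x 2) (x 3 - x 2))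
    -- the face `F_i` opposite the vertex `x i`, parametrized over the unit triangle
    (i a b c : Fin 4)
    (hia : i ≠ a) (hib : i ≠ b) (hic : i ≠ c)
    (hab : a ≠ b) (hac : a ≠ c) (hbc : b ≠ c)
    (φ : (Fin 2 → ℝ) → (Fin 3 → ℝ))
    (hφ : φ = fun w => x a + w 0 • (x b - x a) + w 1 • (x c - x a))
    (T : Set (Fin 2 → ℝ))
    (hT : T = {w | 0 ≤ w 0 ∧ 0 ≤ w 1 ∧ w 0 + w 1 ≤ 1})
    -- a (nonzero) normal vector of the face
    (ν : Fin 3 → ℝ) (hν : ν ≠ 0)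
    (hν1 : ν ⬝ᵥ (x b - x a) = 0) (hν2 : ν ⬝ᵥ (x c - x a) = 0)
    -- vanishing of the face moments of `τν`
    (hmom : ∀ v : Fin 3 → MvPolynomial (Fin 3) ℝ,
      (∀ r, (v r).totalDegree ≤ k) →
      ∫ w in T, ((τ (φ w)) *ᵥ ν) ⬝ᵥ (fun r => eval (φ w) (v r)) = 0) :
    ∀ s : Fin 4, s ≠ i →
      ∀ q : MvPolynomial (Fin 3) ℝ, q.totalDegree ≤ k →
        ∫ w in T, p i s (φ w) * eval (φ w) q = 0 := by
  intro s hsi q hq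
  -- `s` is one of `a`, `b`, `c`
  have hs : s = a ∨ s = b ∨ s = c := by
    by_contra hcon
    push_neg at hcon
    obtain ⟨h1, h2, h3⟩ := hcon
    have hcard : ({s, i, a, b, c} : Finset (Fin 4)).card ≤ 4 :=
      le_trans (Finset.card_le_univ _) (by simp)
    rw [Finset.card_insert_of_notMem (by simp [hsi, h1, h2, h3]),
        Finset.card_insert_of_notMem (by simp [hia, hib, hic]),
        Finset.card_insert_of_notMem (by simp [hab, hac]),
        Finset.card_insert_of_notMem (by simp [hbc]), Finset.card_singleton] at hcard
    omega
  have hν3 : ν ⬝ᵥ (x c - x b) = 0 := by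
    have e1 : ν ⬝ᵥ (x c - x b) = ν ⬝ᵥ (x c - x a) - ν ⬝ᵥ (x b - x a) := by
      simp only [dotProduct_sub]; ring
    rw [e1, hν1, hν2]; ring
  have hνneg : ∀ u v : Fin 4, ν ⬝ᵥ (x u - x v) = 0 → ν ⬝ᵥ (x v - x u) = 0 := by
    intro u v h
    have e1 : ν ⬝ᵥ (x v - x u) = -(ν ⬝ᵥ (x u - x v)) := by
      simp only [dotProduct_sub]; ring
    rw [e1, h]; ring
  rcases hs with rfl | rfl | rfl
  · exact face_moments_aux k x hnd p hpsymm τ hτ i s b c hia hib hic hab hac hbc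
      φ T ν hν hν1 hν2 hmom q hq
  · exact face_moments_aux k x hnd p hpsymm τ hτ i s a c hib hia hic
      (Ne.symm hab) hbc hac φ T ν hν (hνneg _ _ hν1) hν3 hmom q hq
  · exact face_moments_aux k x hnd p hpsymm τ hτ i s a b hic hia hib
      (Ne.symm hac) (Ne.symm hbc) hab φ T ν hν (hνneg _ _ hν2) (hνneg _ _ hν3) hmom q hq
end

section
/- On a nondegenerate triangle K ⊂ ℝ², the four lowest-order nonconforming basis generators φ_{1,2}^{(1)} = 5λ₂ − λ₁ − λ₃ + 6(λ₁−λ₂)λ₃, φ_{1,2}^{(2)} = −4λ₂ + 2λ₁ + 2λ₃ − 12(λ₁−λ₂)λ₃, φ_{1,3}^{(1)} = −4λ₃ + 2λ₁ + 2λ₂ − 12(λ₁−λ₃)λ₂, φ_{1,3}^{(2)} = 5λ₃ − λ₁ − λ₂ + 6(λ₁−λ₃)λ₂ satisfy: ∫_{e_j} φ_{1,j}^{(s)} w ds = 0 for all affine w on e_j (j = 2,3), and (1/|e₁|) ∫_{e₁} φ_{1,j}^{(s)} λ_{r+1} ds = δ_{s,r} for 1 ≤ r ≤ 2, where e_m denotes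 the edge opposite vertex x_m. -/
open MeasureTheory intervalIntegral

lemma affineLine (f : (Fin 2 → ℝ) →ᵃ[ℝ] ℝ) (a b : Fin 2 → ℝ) (t : ℝ) :
    f (a + t • (b - a)) = f a + t * (f b - f a) := by
  have h : a + t • (b - a) = AffineMap.lineMap a b t := by
    simp [AffineMap.lineMap_apply]; abel
  rw [h, AffineMap.apply_lineMap, AffineMap.lineMap_apply]
  simp; ring

lemma poly_int (a b c d : ℝ) :
    (∫ t in (0:ℝ)..1, (a + b*t + c*t^2 + d*t^3)) = a + b/2 + c/3 + d/4 := by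
  rw [intervalIntegral.integral_add, intervalIntegral.integral_add,
      intervalIntegral.integral_add]
  · have hb : (∫ x in (0:ℝ)..1, b * x) = b / 2 := by
      rw [intervalIntegral.integral_const_mul, integral_id]; ring
    simp [hb, intervalIntegral.integral_const_mul, integral_pow]
    ring
  all_goals
    apply Continuous.intervalIntegrable
    continuity

/-- The four lowest-order nonconforming generators `φ_{1,j}^{(s)}` on a
triangle have vanishing moments against affine functions on their own opposite
edges `e₂`, `e₃`, and are dual to `λ₂, λ₃` on the edge `e₁` (Kronecker
delta relations). -/
theorem lowest_order_nonconforming_generators_triangle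
    (x : Fin 3 → (Fin 2 → ℝ))
    (hnd : LinearIndependent ℝ ![x 1 - x 0, x 2 - x 0])
    (lam : Fin 3 → ((Fin 2 → ℝ) →ᵃ[ℝ] ℝ))
    (hlam : ∀ i j, lam i (x j) = if i = j then (1 : ℝ) else 0)
    (φ21 φ22 φ31 φ32 : (Fin 2 → ℝ) → ℝ)
    (h21 : φ21 = fun y => 5 * lam 1 y - lam 0 y - lam 2 y
                  + 6 * (lam 0 y - lam 1 y) * lam 2 y)
    (h22 : φ22 = fun y => -4 * lam 1 y + 2 * lam 0 y + 2 * lam 2 y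
                  - 12 * (lam 0 y - lam 1 y) * lam 2 y)
    (h31 : φ31 = fun y => -4 * lam 2 y + 2 * lam 0 y + 2 * lam 1 y
                  - 12 * (lam 0 y - lam 2 y) * lam 1 y)
    (h32 : φ32 = fun y => 5 * lam 2 y - lam 0 y - lam 1 y
                  + 6 * (lam 0 y - lam 2 y) * lam 1 y) :
    -- vanishing moments against affine functions on `e₂` (joining x₁, x₃)
    (∀ c d : ℝ,
      (∫ t in (0:ℝ)..1, φ21 (x 0 + t • (x 2 - x 0)) * (c + d * t)) = 0 ∧
      (∫ t in (0:ℝ)..1, φ22 (x 0 + t • (x 2 - x 0)) * (c + d * t)) = 0) ∧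
    -- vanishing moments against affine functions on `e₃` (joining x₁, x₂)
    (∀ c d : ℝ,
      (∫ t in (0:ℝ)..1, φ31 (x 0 + t • (x 1 - x 0)) * (c + d * t)) = 0 ∧
      (∫ t in (0:ℝ)..1, φ32 (x 0 + t • (x 1 - x 0)) * (c + d * t)) = 0) ∧
    -- duality with `λ₂`, `λ₃` on `e₁` (joining x₂, x₃)
    (∫ t in (0:ℝ)..1, φ21 (x 1 + t • (x 2 - x 1)) * lam 1 (x 1 + t • (x 2 - x 1))) = 1 ∧
    (∫ t in (0:ℝ)..1, φ21 (x 1 + t • (x 2 - x 1)) * lam 2 (x 1 + t • (x 2 - x 1))) = 0 ∧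
    (∫ t in (0:ℝ)..1, φ22 (x 1 + t • (x 2 - x 1)) * lam 1 (x 1 + t • (x 2 - x 1))) = 0 ∧
    (∫ t in (0:ℝ)..1, φ22 (x 1 + t • (x 2 - x 1)) * lam 2 (x 1 + t • (x 2 - x 1))) = 1 ∧
    (∫ t in (0:ℝ)..1, φ31 (x 1 + t • (x 2 - x 1)) * lam 1 (x 1 + t • (x 2 - x 1))) = 1 ∧
    (∫ t in (0:ℝ)..1, φ31 (x 1 + t • (x 2 - x 1)) * lam 2 (x 1 + t • (x 2 - x 1))) = 0 ∧
    (∫ t in (0:ℝ)..1, φ32 (x 1 + t • (x 2 - x 1)) * lam 1 (x 1 + t • (x 2 - x 1))) = 0 ∧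
    (∫ t in (0:ℝ)..1, φ32 (x 1 + t • (x 2 - x 1)) * lam 2 (x 1 + t • (x 2 - x 1))) = 1 := by
  refine ⟨fun c d => ⟨?_, ?_⟩, fun c d => ⟨?_, ?_⟩, ?_, ?_, ?_, ?_, ?_, ?_, ?_, ?_⟩
  · have h : ∀ t : ℝ, φ21 (x 0 + t • (x 2 - x 0)) * (c + d * t)
        = (-c) + (6*c-d)*t + (6*d-6*c)*t^2 + (-6*d)*t^3 := fun t => by
      simp [h21, affineLine, hlam]; ring
    rw [intervalIntegral.integral_congr (fun t _ => h t), poly_int]; ring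
  · have h : ∀ t : ℝ, φ22 (x 0 + t • (x 2 - x 0)) * (c + d * t)
        = (2*c) + (2*d-12*c)*t + (12*c-12*d)*t^2 + (12*d)*t^3 := fun t => by
      simp [h22, affineLine, hlam]; ring
    rw [intervalIntegral.integral_congr (fun t _ => h t), poly_int]; ring
  · have h : ∀ t : ℝ, φ31 (x 0 + t • (x 1 - x 0)) * (c + d * t)
        = (2*c) + (2*d-12*c)*t + (12*c-12*d)*t^2 + (12*d)*t^3 := fun t => by
      simp [h31, affineLine, hlam]; ring
    rw [intervalIntegral.integral_congr (fun t _ => h t), poly_int]; ring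
  · have h : ∀ t : ℝ, φ32 (x 0 + t • (x 1 - x 0)) * (c + d * t)
        = (-c) + (6*c-d)*t + (6*d-6*c)*t^2 + (-6*d)*t^3 := fun t => by
      simp [h32, affineLine, hlam]; ring
    rw [intervalIntegral.integral_congr (fun t _ => h t), poly_int]; ring
  · have h : ∀ t : ℝ, φ21 (x 1 + t • (x 2 - x 1)) * lam 1 (x 1 + t • (x 2 - x 1))
        = (5:ℝ) + (-17)*t + 18*t^2 + (-6)*t^3 := fun t => by
      simp [h21, affineLine, hlam]; ring
    rw [intervalIntegral.integral_congr (fun t _ => h t), poly_int]; norm_num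
  · have h : ∀ t : ℝ, φ21 (x 1 + t • (x 2 - x 1)) * lam 2 (x 1 + t • (x 2 - x 1))
        = (0:ℝ) + 5*t + (-12)*t^2 + 6*t^3 := fun t => by
      simp [h21, affineLine, hlam]; ring
    rw [intervalIntegral.integral_congr (fun t _ => h t), poly_int]; norm_num
  · have h : ∀ t : ℝ, φ22 (x 1 + t • (x 2 - x 1)) * lam 1 (x 1 + t • (x 2 - x 1))
        = (-4:ℝ) + 22*t + (-30)*t^2 + 12*t^3 := fun t => by
      simp [h22, affineLine, hlam]; ring
    rw [intervalIntegral.integral_congr (fun t _ => h t), poly_int]; norm_num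
  · have h : ∀ t : ℝ, φ22 (x 1 + t • (x 2 - x 1)) * lam 2 (x 1 + t • (x 2 - x 1))
        = (0:ℝ) + (-4)*t + 18*t^2 + (-12)*t^3 := fun t => by
      simp [h22, affineLine, hlam]; ring
    rw [intervalIntegral.integral_congr (fun t _ => h t), poly_int]; norm_num
  · have h : ∀ t : ℝ, φ31 (x 1 + t • (x 2 - x 1)) * lam 1 (x 1 + t • (x 2 - x 1))
        = (2:ℝ) + 4*t + (-18)*t^2 + 12*t^3 := fun t => by
      simp [h31, affineLine, hlam]; ring
    rw [intervalIntegral.integral_congr (fun t _ => h t), poly_int]; norm_num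
  · have h : ∀ t : ℝ, φ31 (x 1 + t • (x 2 - x 1)) * lam 2 (x 1 + t • (x 2 - x 1))
        = (0:ℝ) + 2*t + 6*t^2 + (-12)*t^3 := fun t => by
      simp [h31, affineLine, hlam]; ring
    rw [intervalIntegral.integral_congr (fun t _ => h t), poly_int]; norm_num
  · have h : ∀ t : ℝ, φ32 (x 1 + t • (x 2 - x 1)) * lam 1 (x 1 + t • (x 2 - x 1))
        = (-1:ℝ) + 1*t + 6*t^2 + (-6)*t^3 := fun t => by
      simp [h32, affineLine, hlam]; ring
    rw [intervalIntegral.integral_congr (fun t _ => h t), poly_int]; norm_num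
  · have h : ∀ t : ℝ, φ32 (x 1 + t • (x 2 - x 1)) * lam 2 (x 1 + t • (x 2 - x 1))
        = (0:ℝ) + (-1)*t + 0*t^2 + 6*t^3 := fun t => by
      simp [h32, affineLine, hlam]; ring
    rw [intervalIntegral.integral_congr (fun t _ => h t), poly_int]; norm_num
end

section
/- Let Δ_{xy} be a nondegenerate triangle and suppose v₃ ∈ P_k(x,y), p₁, p₂ ∈ P_{k−2}(z), c₁, c₂ ∈ ℝ and p₃ ∈ P_{k−1}(z) are such that the vector field ∇_{xy}(c₁x + c₂y + v₃ + xz p₁(z) + yz p₂(z)) + p₃(z)(y,−x)^T is identically zero on Δ_{xy} × Δ_z. Then p₃ = 0, p₁ = 0, p₂ = 0 and ∇_{xy}(c₁x + c₂y + v₃) = 0. -/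
open MvPolynomial

lemma my_pderiv_comm (i j : Fin 2) (p : MvPolynomial (Fin 2) ℝ) :
    pderiv i (pderiv j p) = pderiv j (pderiv i p) := by
  induction p using MvPolynomial.induction_on with
  | C a => simp
  | add p q hp hq => simp [hp, hq]
  | mul_X p n hp =>
    rcases eq_or_ne n i with rfl | hni <;> rcases eq_or_ne n j with rfl | hnj <;>
      simp [pderiv_mul, hp, pderiv_X_of_ne, *] <;> ring

lemma my_line_eval (F : MvPolynomial (Fin 2) ℝ) (c w : Fin 2 → ℝ) (t : ℝ) :
    Polynomial.eval t (MvPolynomial.aeval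
        (fun i => Polynomial.C (c i) + Polynomial.C (w i) * Polynomial.X) F)
      = MvPolynomial.eval (fun i => c i + w i * t) F := by
  rw [← Polynomial.coe_aeval_eq_eval,
    MvPolynomial.comp_aeval_apply (f := fun i => Polynomial.C (c i) + Polynomial.C (w i) * Polynomial.X)
      (Polynomial.aeval t) F]
  rw [← MvPolynomial.coe_aeval_eq_eval]
  simp

lemma my_poly_zero {z₀ z₁ : ℝ} (hz : z₀ < z₁) (P : Polynomial ℝ)
    (h : ∀ z ∈ Set.Icc z₀ z₁, P.eval z = 0) : P = 0 :=
  Polynomial.eq_zero_of_infinite_isRoot P ((Set.Icc_infinite hz).mono h)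

lemma my_vanish_zero (x : Fin 3 → (Fin 2 → ℝ))
    (hnd : LinearIndependent ℝ ![x 1 - x 0, x 2 - x 0])
    (F : MvPolynomial (Fin 2) ℝ)
    (h : ∀ q ∈ convexHull ℝ (Set.range x), eval q F = 0) : F = 0 := by
  set u := x 1 - x 0 with hu
  set v := x 2 - x 0 with hv
  -- membership of convex combinations
  have hmem : ∀ s t : ℝ, 0 ≤ s → 0 ≤ t → s + t ≤ 1 →
      (fun i => x 0 i + s * u i + t * v i) ∈ convexHull ℝ (Set.range x) := by
    intro s t hs ht hst
    have := Finset.centerMass_mem_convexHull (Finset.univ : Finset (Fin 3))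
      (w := ![1 - s - t, s, t]) (z := x) (s := Set.range x) ?_ ?_ ?_
    · convert this using 1
      rw [Finset.centerMass]
      funext i
      simp [Fin.sum_univ_three, hu, hv]
      ring
    · intro i _; fin_cases i <;> simp <;> linarith
    · simp [Fin.sum_univ_three]; linarith
    · intro i _; exact Set.mem_range_self i
  -- step 1: fix t, vary s over all reals
  have step1 : ∀ t ∈ Set.Icc (0:ℝ) (1/3), ∀ s : ℝ,
      eval (fun i => (x 0 i + t * v i) + u i * s) F = 0 := by
    intro t ht s
    have hQ : (MvPolynomial.aeval
        (fun i => Polynomial.C (x 0 i + t * v i) + Polynomial.C (u i) * Polynomial.X) F) = 0 := by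
      apply my_poly_zero (by norm_num : (0:ℝ) < 1/3)
      intro z hzz
      rw [my_line_eval]
      have := hmem z t hzz.1 ht.1 (by have := hzz.2; have := ht.2; linarith)
      have heq : (fun i => x 0 i + t * v i + u i * z) = (fun i => x 0 i + z * u i + t * v i) := by
        funext i; ring
      rw [heq]
      exact h _ this
    have := my_line_eval F (fun i => x 0 i + t * v i) u s
    rw [hQ] at this
    simpa using this.symm
  -- step 2: fix s arbitrary, vary t
  have step2 : ∀ s t : ℝ, eval (fun i => (x 0 i + s * u i) + v i * t) F = 0 := by
    intro s t
    have hR : (MvPolynomial.aeval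
        (fun i => Polynomial.C (x 0 i + s * u i) + Polynomial.C (v i) * Polynomial.X) F) = 0 := by
      apply my_poly_zero (by norm_num : (0:ℝ) < 1/3)
      intro z hzz
      rw [my_line_eval]
      have heq : (fun i => x 0 i + s * u i + v i * z) = (fun i => x 0 i + z * v i + u i * s) := by
        funext i; ring
      rw [heq]
      exact step1 z hzz s
    have := my_line_eval F (fun i => x 0 i + s * u i) v t
    rw [hR] at this
    simpa using this.symm
  -- step 3: every point is of this form
  have hspan : Submodule.span ℝ {u, v} = ⊤ := by
    have hcard : Fintype.card (Fin 2) = Module.finrank ℝ (Fin 2 → ℝ) := by simp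
    have := hnd.span_eq_top_of_card_eq_finrank hcard
    rwa [show Set.range ![u, v] = {u, v} by simp [Set.range_subset_iff]; ext w; simp [Fin.exists_fin_two]; tauto] at this
  apply MvPolynomial.funext
  intro q
  have hq : q - x 0 ∈ Submodule.span ℝ ({u, v} : Set (Fin 2 → ℝ)) := by
    rw [hspan]; trivial
  obtain ⟨a, b, hab⟩ := Submodule.mem_span_pair.mp hq
  rw [map_zero]
  have hq2 : q = fun i => x 0 i + a * u i + v i * b := by
    funext i
    have h3 := congrFun hab i
    simp [Pi.sub_apply] at h3
    linarith
  rw [hq2]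
  exact step2 a b


/-- If `∇_{xy}(c₁x + c₂y + v₃ + xz p₁(z) + yz p₂(z)) + p₃(z)(y,−x)` vanishes
identically on `Δ_{xy} × Δ_z`, then `p₁ = p₂ = p₃ = 0` and
`∇_{xy}(c₁x + c₂y + v₃) = 0`. -/
theorem gradient_plus_rotation_vanishing
    (k : ℕ)
    (x : Fin 3 → (Fin 2 → ℝ))
    (hnd : LinearIndependent ℝ ![x 1 - x 0, x 2 - x 0])
    (Δxy : Set (Fin 2 → ℝ)) (hΔxy : Δxy = convexHull ℝ (Set.range x))
    (z₀ z₁ : ℝ) (hz : z₀ < z₁)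
    (v₃ : MvPolynomial (Fin 2) ℝ) (hv₃ : v₃.totalDegree ≤ k)
    (c₁ c₂ : ℝ)
    (p₁ p₂ p₃ : Polynomial ℝ)
    (hp₁ : p₁.degree < ((k - 1 : ℕ) : WithBot ℕ))
    (hp₂ : p₂.degree < ((k - 1 : ℕ) : WithBot ℕ))
    (hp₃ : p₃.degree < ((k : ℕ) : WithBot ℕ))
    (hzero : ∀ q ∈ Δxy, ∀ z ∈ Set.Icc z₀ z₁,
      c₁ + eval q (pderiv 0 v₃) + z * p₁.eval z + p₃.eval z * q 1 = 0 ∧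
      c₂ + eval q (pderiv 1 v₃) + z * p₂.eval z - p₃.eval z * q 0 = 0) :
    p₃ = 0 ∧ p₁ = 0 ∧ p₂ = 0 ∧
    ∀ q ∈ Δxy,
      c₁ + eval q (pderiv 0 v₃) = 0 ∧ c₂ + eval q (pderiv 1 v₃) = 0 := by
  subst hΔxy
  set Δ := convexHull ℝ (Set.range x) with hΔ
  -- univariate polynomial identities for each fixed q
  have hA : ∀ q ∈ Δ, Polynomial.C (c₁ + eval q (pderiv 0 v₃)) + Polynomial.X * p₁
      + Polynomial.C (q 1) * p₃ = 0 := by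
    intro q hq
    apply my_poly_zero hz
    intro z hzz
    have h1 := (hzero q hq z hzz).1
    simp only [Polynomial.eval_add, Polynomial.eval_mul, Polynomial.eval_C, Polynomial.eval_X]
    linarith
  have hB : ∀ q ∈ Δ, Polynomial.C (c₂ + eval q (pderiv 1 v₃)) + Polynomial.X * p₂
      - Polynomial.C (q 0) * p₃ = 0 := by
    intro q hq
    apply my_poly_zero hz
    intro z hzz
    have h1 := (hzero q hq z hzz).2
    simp only [Polynomial.eval_sub, Polynomial.eval_add, Polynomial.eval_mul, Polynomial.eval_C,
      Polynomial.eval_X]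
    linarith
  have hxmem : ∀ i, x i ∈ Δ := fun i => subset_convexHull ℝ _ (Set.mem_range_self i)
  -- p₃ is constant
  have key : ∀ q ∈ Δ, ∀ q' ∈ Δ, q' 0 ≠ q 0 → ∃ d, p₃ = Polynomial.C d := by
    intro q hq q' hq' hne
    refine ⟨(q' 0 - q 0)⁻¹ * ((c₂ + eval q' (pderiv 1 v₃)) - (c₂ + eval q (pderiv 1 v₃))), ?_⟩
    have hδ : q' 0 - q 0 ≠ 0 := sub_ne_zero.mpr hne
    have h5 : Polynomial.C (q' 0 - q 0) * p₃
        = Polynomial.C ((c₂ + eval q' (pderiv 1 v₃)) - (c₂ + eval q (pderiv 1 v₃))) := by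
      rw [map_sub, map_sub]
      linear_combination (hB q hq) - (hB q' hq')
    calc p₃ = Polynomial.C ((q' 0 - q 0)⁻¹) * (Polynomial.C (q' 0 - q 0) * p₃) := by
          rw [← mul_assoc, ← map_mul, inv_mul_cancel₀ hδ, map_one, one_mul]
      _ = _ := by rw [h5, ← map_mul]
  have h0 : (x 1 - x 0) 0 ≠ 0 ∨ (x 2 - x 0) 0 ≠ 0 := by
    by_contra hcon
    push_neg at hcon
    obtain ⟨hu0, hv0⟩ := hcon
    rw [LinearIndependent.pair_iff] at hnd
    by_cases h1 : (x 1 - x 0) 1 = 0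
    · have := (hnd 1 0 (by
        funext i
        fin_cases i
        · simpa using hu0
        · simpa using h1)).1
      norm_num at this
    · have := (hnd ((x 2 - x 0) 1) (-((x 1 - x 0) 1)) (by
        funext i
        fin_cases i
        · simp only [Pi.add_apply, Pi.smul_apply, smul_eq_mul, Pi.zero_apply]
          simp [hu0, hv0]
        · simp only [Pi.add_apply, Pi.smul_apply, smul_eq_mul, Pi.zero_apply, Fin.mk_one]
          ring)).2
      simp only [neg_eq_zero] at this
      exact h1 this
  obtain ⟨d, hd⟩ : ∃ d, p₃ = Polynomial.C d := by
    rcases h0 with h | h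
    · refine key (x 0) (hxmem 0) (x 1) (hxmem 1) ?_
      intro he; apply h; simp [he]
    · refine key (x 0) (hxmem 0) (x 2) (hxmem 2) ?_
      intro he; apply h; simp [he]
  -- p₁ = 0
  have hq0 : x 0 ∈ Δ := hxmem 0
  have hXp1 : Polynomial.X * p₁
      = Polynomial.C (-((c₁ + eval (x 0) (pderiv 0 v₃)) + (x 0) 1 * d)) := by
    rw [map_neg, map_add, map_mul]
    have := hA (x 0) hq0
    rw [hd] at this
    linear_combination this
  have hp1 : p₁ = 0 := by
    ext n
    have := congrArg (fun P => Polynomial.coeff P (n + 1)) hXp1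
    simpa [Polynomial.coeff_X_mul, Polynomial.coeff_C] using this
  have hXp2 : Polynomial.X * p₂
      = Polynomial.C (-((c₂ + eval (x 0) (pderiv 1 v₃)) - (x 0) 0 * d)) := by
    rw [map_neg, map_sub, map_mul]
    have := hB (x 0) hq0
    rw [hd] at this
    linear_combination this
  have hp2 : p₂ = 0 := by
    ext n
    have := congrArg (fun P => Polynomial.coeff P (n + 1)) hXp2
    simpa [Polynomial.coeff_X_mul, Polynomial.coeff_C] using this
  -- pointwise identities with d
  have hFa : ∀ q ∈ Δ, c₁ + eval q (pderiv 0 v₃) + d * q 1 = 0 := by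
    intro q hq
    have := hA q hq
    rw [hd, hp1, mul_zero, add_zero, ← map_mul, ← map_add] at this
    have h6 := Polynomial.C_eq_zero.mp this
    linarith
  have hGb : ∀ q ∈ Δ, c₂ + eval q (pderiv 1 v₃) - d * q 0 = 0 := by
    intro q hq
    have := hB q hq
    rw [hd, hp2, mul_zero, add_zero, ← map_mul, ← map_sub] at this
    have h6 := Polynomial.C_eq_zero.mp this
    linarith
  -- d = 0 via vanishing polynomials and commuting mixed partials
  have hF : (C c₁ + pderiv 0 v₃ + C d * X 1 : MvPolynomial (Fin 2) ℝ) = 0 := by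
    apply my_vanish_zero x hnd
    intro q hq
    have := hFa q hq
    simp only [map_add, map_mul, eval_C, eval_X]
    linarith
  have hG : (C c₂ + pderiv 1 v₃ - C d * X 0 : MvPolynomial (Fin 2) ℝ) = 0 := by
    apply my_vanish_zero x hnd
    intro q hq
    have := hGb q hq
    simp only [map_sub, map_add, map_mul, eval_C, eval_X]
    linarith
  have h1 : pderiv 1 (pderiv 0 v₃) + C d = 0 := by
    have := congrArg (pderiv 1) hF
    simpa [pderiv_C_mul] using this
  have h2 : pderiv 0 (pderiv 1 v₃) - C d = 0 := by
    have := congrArg (pderiv 0) hG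
    simpa [pderiv_C_mul] using this
  have hd0 : d = 0 := by
    have h3 : (C (d + d) : MvPolynomial (Fin 2) ℝ) = C 0 := by
      rw [map_add, map_zero]
      linear_combination h1 - h2 - my_pderiv_comm 1 0 v₃
    have := MvPolynomial.C_injective (Fin 2) ℝ h3
    linarith
  subst hd0
  rw [map_zero] at hd
  refine ⟨hd, hp1, hp2, ?_⟩
  intro q hq
  constructor
  · have := hFa q hq; linarith
  · have := hGb q hq; linarith
end

section
/- For a nondegenerate tetrahedron K with barycentric coordinates λ₁,...,λ₄ and edge vectors t_{i,j}, every element of the bubble space H_{K,k+1,b} = Σ_{1≤i<j≤4} λ_iλ_j P_{k−1}(K;ℝ) t_{i,j}t_{i,j}^T has vanishing normal trace on ∂K: for every τ ∈ H_{K,k+1,b} and every face F of K with unit normal ν, τν = 0 on F. -/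
open Matrix MvPolynomial

lemma monom_le_one (m : Fin 3 →₀ ℕ) (h : (m.sum fun _ e => e) ≤ 1) :
    m = 0 ∨ ∃ i, m = Finsupp.single i 1 := by
  by_cases hm : m = 0
  · exact Or.inl hm
  · right
    obtain ⟨i, hi⟩ := Finsupp.support_nonempty_iff.mpr hm
    refine ⟨i, Finsupp.ext fun j => ?_⟩
    have hsum : (m.sum fun _ e => e) = ∑ j ∈ m.support, m j := rfl
    have hmi : 1 ≤ m i := Nat.one_le_iff_ne_zero.mpr (Finsupp.mem_support_iff.mp hi)
    have hle : m i ≤ ∑ j ∈ m.support, m j :=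
      Finset.single_le_sum (fun _ _ => Nat.zero_le _) hi
    by_cases hji : j = i
    · subst hji
      have : m j ≤ 1 := le_trans hle (hsum ▸ h)
      simp [le_antisymm this hmi]
    · simp only [Finsupp.single_apply, if_neg (Ne.symm hji)]
      by_contra hj
      have hjs : j ∈ m.support := Finsupp.mem_support_iff.mpr hj
      have h2 : m i + m j ≤ ∑ l ∈ m.support, m l := by
        have : ∑ l ∈ ({i, j} : Finset (Fin 3)), m l ≤ ∑ l ∈ m.support, m l := by
          apply Finset.sum_le_sum_of_subset
          intro l hl
          simp only [Finset.mem_insert, Finset.mem_singleton] at hl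
          rcases hl with rfl | rfl <;> assumption
        rwa [Finset.sum_pair (fun hh => hji (hh.symm))] at this
      have : 2 ≤ (1:ℕ) := le_trans (le_trans (add_le_add hmi (Nat.one_le_iff_ne_zero.mpr hj)) h2) (hsum ▸ h)
      omega

lemma eval_affine2 (q : MvPolynomial (Fin 3) ℝ) (hq : q.totalDegree ≤ 1)
    (u v : Fin 3 → ℝ) (s t : ℝ) (hst : s + t = 1) :
    eval (s • u + t • v) q = s * eval u q + t * eval v q := by
  rw [eval_eq, eval_eq, eval_eq, Finset.mul_sum, Finset.mul_sum, ← Finset.sum_add_distrib]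
  refine Finset.sum_congr rfl fun m hm => ?_
  rcases monom_le_one m (le_trans (le_totalDegree hm) hq) with rfl | ⟨i, rfl⟩
  · simp [← add_mul, hst]
  · have hs : (Finsupp.single i 1).support = {i} := Finsupp.support_single_ne_zero i one_ne_zero
    simp only [hs, Finset.prod_singleton, Finsupp.single_apply, if_pos rfl, if_true,
      pow_one, Pi.add_apply, Pi.smul_apply, smul_eq_mul]
    ring

/-- Every element of the tetrahedral bubble space
`H_{K,k+1,b} = Σ_{i<j} λ_iλ_j P_{k−1} t_{i,j}t_{i,j}ᵀ` has vanishing normal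
trace on every face of the tetrahedron. -/
theorem tetrahedral_bubble_normal_trace_zero
    (k : ℕ) (hk : 1 ≤ k)
    (x : Fin 4 → (Fin 3 → ℝ))
    (hnd : LinearIndependent ℝ ![x 1 - x 0, x 2 - x 0, x 3 - x 0])
    (lam : Fin 4 → MvPolynomial (Fin 3) ℝ)
    (hdeg : ∀ i, (lam i).totalDegree ≤ 1)
    (hlam : ∀ i j, eval (x j) (lam i) = if i = j then (1 : ℝ) else 0)
    (M : Fin 4 → Fin 4 → Matrix (Fin 3) (Fin 3) (MvPolynomial (Fin 3) ℝ))
    (hM : ∀ i j, M i j = (vecMulVec (x j - x i) (x j - x i)).map C)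
    (p : Fin 4 → Fin 4 → MvPolynomial (Fin 3) ℝ)
    (hp : ∀ i j, (p i j).totalDegree ≤ k - 1)
    (τ : Matrix (Fin 3) (Fin 3) (MvPolynomial (Fin 3) ℝ))
    (hτ : τ = (lam 0 * lam 1 * p 0 1) • M 0 1
            + (lam 0 * lam 2 * p 0 2) • M 0 2
            + (lam 0 * lam 3 * p 0 3) • M 0 3
            + (lam 1 * lam 2 * p 1 2) • M 1 2
            + (lam 1 * lam 3 * p 1 3) • M 1 3
            + (lam 2 * lam 3 * p 2 3) • M 2 3) :
    ∀ a b c : Fin 4, a ≠ b → a ≠ c → b ≠ c →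
      ∀ ν : Fin 3 → ℝ,
        ν ⬝ᵥ (x b - x a) = 0 → ν ⬝ᵥ (x c - x a) = 0 →
        ∀ y ∈ convexHull ℝ ({x a, x b, x c} : Set (Fin 3 → ℝ)),
          (τ.map (eval y)) *ᵥ ν = 0 := by
  intro a b c hab hac hbc ν hb hc y hy
  -- barycentric coordinate of the opposite vertex vanishes on the face
  have hvan : ∀ e : Fin 4, e ≠ a → e ≠ b → e ≠ c → eval y (lam e) = 0 := by
    intro e hea heb hec
    have hconv : convexHull ℝ ({x a, x b, x c} : Set (Fin 3 → ℝ))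
        ⊆ {z | eval z (lam e) = 0} := by
      apply convexHull_min
      · rintro z (rfl | rfl | rfl) <;>
          simp [Set.mem_setOf_eq, hlam, hea, heb, hec]
      · intro u hu v hv s t _ _ hst
        simp only [Set.mem_setOf_eq] at *
        rw [eval_affine2 _ (hdeg e) u v s t hst, hu, hv]
        ring
    exact hconv hy
  -- tangential edge vectors are orthogonal to ν
  have haux : ∀ i : Fin 4, (i = a ∨ i = b ∨ i = c) → ν ⬝ᵥ (x i - x a) = 0 := by
    rintro i (rfl | rfl | rfl)
    · simp
    · exact hb
    · exact hc
  have hdot : ∀ i j : Fin 4, (i = a ∨ i = b ∨ i = c) → (j = a ∨ j = b ∨ j = c) →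
      (x j - x i) ⬝ᵥ ν = 0 := by
    intro i j hi hj
    have hsplit : x j - x i = (x j - x a) - (x i - x a) := by abel
    rw [dotProduct_comm, hsplit, dotProduct_sub, haux i hi, haux j hj, sub_zero]
  -- each of the six terms vanishes after taking the normal trace
  have hterm : ∀ i j : Fin 4,
      eval y (lam i * lam j * p i j) * ((x j - x i) ⬝ᵥ ν) = 0 := by
    intro i j
    by_cases hi : i = a ∨ i = b ∨ i = c
    · by_cases hj : j = a ∨ j = b ∨ j = c
      · rw [hdot i j hi hj, mul_zero]
      · push_neg at hj
        simp [_root_.map_mul, hvan j hj.1 hj.2.1 hj.2.2]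
    · push_neg at hi
      simp [_root_.map_mul, hvan i hi.1 hi.2.1 hi.2.2]
  have htermVec : ∀ i j : Fin 4,
      (((lam i * lam j * p i j) • M i j).map (eval y)) *ᵥ ν = 0 := by
    intro i j
    rw [hM i j]
    funext m
    simp only [mulVec, dotProduct, Matrix.map_apply, Matrix.smul_apply,
      vecMulVec_apply, smul_eq_mul, _root_.map_mul, eval_C, Pi.zero_apply]
    have E := hterm i j
    rw [_root_.map_mul, _root_.map_mul] at E
    have key : ∑ l, eval y (lam i) * eval y (lam j) * eval y (p i j)
          * ((x j - x i) m * (x j - x i) l) * ν l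
        = eval y (lam i) * eval y (lam j) * eval y (p i j)
          * ((x j - x i) ⬝ᵥ ν) * (x j - x i) m := by
      rw [dotProduct, Finset.mul_sum, Finset.sum_mul]
      exact Finset.sum_congr rfl fun l _ => by ring
    rw [key, E, zero_mul]
  subst hτ
  simp only [Matrix.map_add (eval y) (fun a b => map_add (eval y) a b),
    Matrix.add_mulVec, htermVec, add_zero]
end
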